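/- arXiv:1205.1348 — 5 statements merged into one kernel-verified Lean document; each statement's English description precedes it below -/
import Mathlib

section
/- For every odd integer k with 1 ≤ k ≤ 2n+1, the depth of S/I^k is 0; equivalently, the graded maximal ideal m of S is an associated prime of S/I^k. -/
open MvPolynomial

noncomputable section

/-- The depth of a module `M` with respect to an ideal `J`: the supremum of the lengths of
`M`-regular sequences consisting of elements of `J`. -/
noncomputable def depthWrt {R : Type*} [CommRing R] (J : Ideal R)
    (M : Type*) [AddCommGroup M] [Module R M] : ℕ∞ :=
  sSup {k : ℕ∞ | ∃ rs : List R, (rs.length : ℕ∞) = k ∧ (∀ r ∈ rs, r ∈ J) ∧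
    RingTheory.Sequence.IsRegular M rs}

/-- The type of the `2n+4` variables `a, b, c, d, x₁, y₁, …, xₙ, yₙ`. -/
abbrev Vars (n : ℕ) : Type := Fin 4 ⊕ Fin n ⊕ Fin n

variable (K : Type*) [Field K] (n : ℕ)

/-- The variable `a`. -/
def va : MvPolynomial (Vars n) K := X (Sum.inl 0)
/-- The variable `b`. -/
def vb : MvPolynomial (Vars n) K := X (Sum.inl 1)
/-- The variable `c`. -/
def vc : MvPolynomial (Vars n) K := X (Sum.inl 2)
/-- The variable `d`. -/
def vd : MvPolynomial (Vars n) K := X (Sum.inl 3)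
/-- The variable `xᵢ` (for `i = 0, …, n-1` corresponding to `x₁, …, xₙ`). -/
def vx (i : Fin n) : MvPolynomial (Vars n) K := X (Sum.inr (Sum.inl i))
/-- The variable `yᵢ` (for `i = 0, …, n-1` corresponding to `y₁, …, yₙ`). -/
def vy (i : Fin n) : MvPolynomial (Vars n) K := X (Sum.inr (Sum.inr i))

/-- The monomial ideal
`I = (a⁶, a⁵b, ab⁵, b⁶, a⁴b⁴c, a⁴b⁴d, a⁴x₁y₁², b⁴x₁²y₁, …, a⁴xₙyₙ², b⁴xₙ²yₙ)`. -/
def idealI : Ideal (MvPolynomial (Vars n) K) :=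
  Ideal.span
    ({va K n ^ 6, va K n ^ 5 * vb K n, va K n * vb K n ^ 5, vb K n ^ 6,
      va K n ^ 4 * vb K n ^ 4 * vc K n, va K n ^ 4 * vb K n ^ 4 * vd K n} ∪
     Set.range (fun i => va K n ^ 4 * vx K n i * vy K n i ^ 2) ∪
     Set.range (fun i => vb K n ^ 4 * vx K n i ^ 2 * vy K n i))

/-- The graded maximal ideal `m = (a,b,c,d,x₁,y₁,…,xₙ,yₙ)`. -/
def mMax : Ideal (MvPolynomial (Vars n) K) := Ideal.span (Set.range X)


namespace BHH

open Finsupp Finset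

inductive Gen (n : ℕ) : Type
  | gA | gB | gC | gD | gE | gF
  | gP (i : Fin n) | gQ (i : Fin n)
  deriving DecidableEq

variable {n : ℕ}

def genv : Gen n → (Vars n →₀ ℕ)
  | .gA => single (Sum.inl 0) 6
  | .gB => single (Sum.inl 0) 5 + single (Sum.inl 1) 1
  | .gC => single (Sum.inl 0) 1 + single (Sum.inl 1) 5
  | .gD => single (Sum.inl 1) 6
  | .gE => single (Sum.inl 0) 4 + single (Sum.inl 1) 4 + single (Sum.inl 2) 1
  | .gF => single (Sum.inl 0) 4 + single (Sum.inl 1) 4 + single (Sum.inl 3) 1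
  | .gP i => single (Sum.inl 0) 4 + single (Sum.inr (Sum.inl i)) 1 + single (Sum.inr (Sum.inr i)) 2
  | .gQ i => single (Sum.inl 1) 4 + single (Sum.inr (Sum.inl i)) 2 + single (Sum.inr (Sum.inr i)) 1

def Ew (n t : ℕ) : Vars n →₀ ℕ :=
  single (Sum.inl 0) (4*t+4) + single (Sum.inl 1) (4*t+4)
  + ∑ i : Fin n, single (Sum.inr (Sum.inl i)) (if (i:ℕ) < t then 3 else 1)
  + ∑ i : Fin n, single (Sum.inr (Sum.inr i)) (if (i:ℕ) < t then 3 else 1)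

@[simp] lemma Ew_a (t : ℕ) : Ew n t (Sum.inl 0) = 4*t+4 := by
  simp [Ew, Finsupp.single_apply, Finsupp.finset_sum_apply]
@[simp] lemma Ew_b (t : ℕ) : Ew n t (Sum.inl 1) = 4*t+4 := by
  simp [Ew, Finsupp.single_apply, Finsupp.finset_sum_apply]
@[simp] lemma Ew_c (t : ℕ) : Ew n t (Sum.inl 2) = 0 := by
  simp [Ew, Finsupp.single_apply, Finsupp.finset_sum_apply]
@[simp] lemma Ew_d (t : ℕ) : Ew n t (Sum.inl 3) = 0 := by
  simp [Ew, Finsupp.single_apply, Finsupp.finset_sum_apply]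
@[simp] lemma Ew_x (t : ℕ) (j : Fin n) :
    Ew n t (Sum.inr (Sum.inl j)) = if (j:ℕ) < t then 3 else 1 := by
  simp [Ew, Finsupp.single_apply, Finsupp.finset_sum_apply]
@[simp] lemma Ew_y (t : ℕ) (j : Fin n) :
    Ew n t (Sum.inr (Sum.inr j)) = if (j:ℕ) < t then 3 else 1 := by
  simp [Ew, Finsupp.single_apply, Finsupp.finset_sum_apply]

lemma wA (γ : Gen n) :
    6*(if γ = Gen.gA then 1 else 0) + 5*(if γ = Gen.gB then 1 else 0)
      + (if γ = Gen.gC then 1 else 0)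
      + 4*(∑ i : Fin n, if γ = Gen.gP i then 1 else 0) ≤ genv γ (Sum.inl 0) := by
  cases γ <;> simp [genv, Finsupp.single_apply, Finset.sum_ite_eq']

lemma wB (γ : Gen n) :
    6*(if γ = Gen.gD then 1 else 0) + 5*(if γ = Gen.gC then 1 else 0)
      + (if γ = Gen.gB then 1 else 0)
      + 4*(∑ i : Fin n, if γ = Gen.gQ i then 1 else 0) ≤ genv γ (Sum.inl 1) := by
  cases γ <;> simp [genv, Finsupp.single_apply, Finset.sum_ite_eq']

lemma wCount (γ : Gen n) (h5 : γ ≠ Gen.gE) (h6 : γ ≠ Gen.gF) :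
    (if γ = Gen.gA then 1 else 0) + (if γ = Gen.gB then 1 else 0)
      + (if γ = Gen.gC then 1 else 0) + (if γ = Gen.gD then 1 else 0)
      + (∑ i : Fin n, if γ = Gen.gP i then 1 else 0)
      + (∑ i : Fin n, if γ = Gen.gQ i then 1 else 0) = 1 := by
  cases γ <;> simp_all [Finset.sum_ite_eq']

lemma wPi (γ : Gen n) (i : Fin n) :
    2*(if γ = Gen.gP i then 1 else 0) ≤ genv γ (Sum.inr (Sum.inr i)) := by
  cases γ <;> simp [genv, Finsupp.single_apply] <;> split_ifs <;> omega

lemma wQi (γ : Gen n) (i : Fin n) :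
    2*(if γ = Gen.gQ i then 1 else 0) ≤ genv γ (Sum.inr (Sum.inl i)) := by
  cases γ <;> simp [genv, Finsupp.single_apply] <;> split_ifs <;> omega

lemma arith (t N1 N2 N3 N4 P Q : ℕ) (h1 : N1+N2+N3+N4+P+Q = 2*t+1)
    (h2 : 6*N1+5*N2+N3+4*P ≤ 4*t+4) (h3 : 6*N4+5*N3+N2+4*Q ≤ 4*t+4)
    (hP : P ≤ t) (hQ : Q ≤ t) : False := by
  have hN1 : N1 ≤ 2 := by omega
  have hN2 : N2 ≤ 2 := by omega
  have hN3 : N3 ≤ 2 := by omega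
  have hN4 : N4 ≤ 2 := by omega
  interval_cases N1 <;> interval_cases N2 <;> interval_cases N3 <;> interval_cases N4 <;> omega

lemma sum_ite_lt {t : ℕ} (ht : t ≤ n) :
    (∑ i : Fin n, if (i:ℕ) < t then 1 else 0) = t := by
  rw [← Finset.card_filter]
  have : (univ.filter fun i : Fin n => (i:ℕ) < t)
      = (univ : Finset (Fin t)).map (Fin.castLEEmb ht) := by
    ext i
    simp only [mem_filter, mem_univ, true_and, mem_map]
    constructor
    · intro hi; exact ⟨⟨i, hi⟩, rfl⟩
    · rintro ⟨j, rfl⟩; exact j.isLt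
  rw [this, Finset.card_map, Finset.card_univ, Fintype.card_fin]

/-- The key combinatorial lemma: the witness monomial is not in `I^(2t+1)`. -/
lemma key {t : ℕ} (ht : t ≤ n) (f : Fin (2*t+1) → Gen n) :
    ¬ (∑ j, genv (f j)) ≤ Ew n t := by
  intro hle
  have hco : ∀ v, (∑ j, genv (f j) v) ≤ Ew n t v := fun v => by
    have h := Finsupp.le_def.mp hle v
    rwa [Finsupp.finset_sum_apply] at h
  -- exclusions
  have h5 : ∀ j, f j ≠ Gen.gE := by
    intro j hj
    have h0 := hco (Sum.inl 2)
    rw [Ew_c, Nat.le_zero, Finset.sum_eq_zero_iff] at h0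
    have := h0 j (Finset.mem_univ j)
    rw [hj] at this
    simp [genv, Finsupp.single_apply] at this
  have h6 : ∀ j, f j ≠ Gen.gF := by
    intro j hj
    have h0 := hco (Sum.inl 3)
    rw [Ew_d, Nat.le_zero, Finset.sum_eq_zero_iff] at h0
    have := h0 j (Finset.mem_univ j)
    rw [hj] at this
    simp [genv, Finsupp.single_apply] at this
  have hPt : ∀ (j) (i : Fin n), ¬ (i:ℕ) < t → f j ≠ Gen.gP i := by
    intro j i hi hj
    have h0 := hco (Sum.inr (Sum.inr i))
    have h1 : genv (f j) (Sum.inr (Sum.inr i)) ≤ ∑ j', genv (f j') (Sum.inr (Sum.inr i)) :=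
      Finset.single_le_sum (f := fun j' => genv (f j') (Sum.inr (Sum.inr i)))
        (fun _ _ => Nat.zero_le _) (Finset.mem_univ j)
    rw [hj] at h1
    simp only [genv, Ew_y, if_neg hi] at h0 h1
    simp [Finsupp.single_apply] at h1
    omega
  have hQt : ∀ (j) (i : Fin n), ¬ (i:ℕ) < t → f j ≠ Gen.gQ i := by
    intro j i hi hj
    have h0 := hco (Sum.inr (Sum.inl i))
    have h1 : genv (f j) (Sum.inr (Sum.inl i)) ≤ ∑ j', genv (f j') (Sum.inr (Sum.inl i)) :=
      Finset.single_le_sum (f := fun j' => genv (f j') (Sum.inr (Sum.inl i)))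
        (fun _ _ => Nat.zero_le _) (Finset.mem_univ j)
    rw [hj] at h1
    simp only [genv, Ew_x, if_neg hi] at h0 h1
    simp [Finsupp.single_apply] at h1
    omega
  -- total count
  have hTot : (∑ j, if f j = Gen.gA then 1 else 0) + (∑ j, if f j = Gen.gB then 1 else 0)
      + (∑ j, if f j = Gen.gC then 1 else 0) + (∑ j, if f j = Gen.gD then 1 else 0)
      + (∑ j, ∑ i : Fin n, if f j = Gen.gP i then 1 else 0)
      + (∑ j, ∑ i : Fin n, if f j = Gen.gQ i then 1 else 0) = 2*t+1 := by
    have h := Finset.sum_congr rfl (fun j (_ : j ∈ Finset.univ) => wCount (f j) (h5 j) (h6 j))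
    rw [Finset.sum_const, Finset.card_univ, Fintype.card_fin, smul_eq_mul, mul_one] at h
    simp only [Finset.sum_add_distrib] at h
    exact h
  have hA : 6*(∑ j, if f j = Gen.gA then 1 else 0) + 5*(∑ j, if f j = Gen.gB then 1 else 0)
      + (∑ j, if f j = Gen.gC then 1 else 0)
      + 4*(∑ j, ∑ i : Fin n, if f j = Gen.gP i then 1 else 0) ≤ 4*t+4 := by
    have h := Finset.sum_le_sum (fun j (_ : j ∈ Finset.univ) => wA (f j))
    have h2 := le_trans h ((hco (Sum.inl 0)).trans_eq (Ew_a t))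
    simp only [Finset.sum_add_distrib, ← Finset.mul_sum] at h2
    exact h2
  have hB : 6*(∑ j, if f j = Gen.gD then 1 else 0) + 5*(∑ j, if f j = Gen.gC then 1 else 0)
      + (∑ j, if f j = Gen.gB then 1 else 0)
      + 4*(∑ j, ∑ i : Fin n, if f j = Gen.gQ i then 1 else 0) ≤ 4*t+4 := by
    have h := Finset.sum_le_sum (fun j (_ : j ∈ Finset.univ) => wB (f j))
    have h2 := le_trans h ((hco (Sum.inl 1)).trans_eq (Ew_b t))
    simp only [Finset.sum_add_distrib, ← Finset.mul_sum] at h2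
    exact h2
  have hPle : (∑ j, ∑ i : Fin n, if f j = Gen.gP i then 1 else 0) ≤ t := by
    have hswap : (∑ j, ∑ i : Fin n, if f j = Gen.gP i then 1 else 0)
        = ∑ i : Fin n, ∑ j, (if f j = Gen.gP i then 1 else 0) := Finset.sum_comm
    rw [hswap]
    calc (∑ i : Fin n, ∑ j, (if f j = Gen.gP i then 1 else 0))
        ≤ ∑ i : Fin n, (if (i:ℕ) < t then 1 else 0) := by
          apply Finset.sum_le_sum
          intro i _
          by_cases hi : (i:ℕ) < t
          · rw [if_pos hi]
            have h1 := Finset.sum_le_sum (fun j (_ : j ∈ Finset.univ) => wPi (f j) i)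
            have h2 := le_trans h1 (hco (Sum.inr (Sum.inr i)))
            rw [Ew_y, if_pos hi, ← Finset.mul_sum] at h2
            omega
          · rw [if_neg hi]
            exact le_of_eq (Finset.sum_eq_zero fun j _ => if_neg (hPt j i hi))
      _ = t := sum_ite_lt ht
  have hQle : (∑ j, ∑ i : Fin n, if f j = Gen.gQ i then 1 else 0) ≤ t := by
    have hswap : (∑ j, ∑ i : Fin n, if f j = Gen.gQ i then 1 else 0)
        = ∑ i : Fin n, ∑ j, (if f j = Gen.gQ i then 1 else 0) := Finset.sum_comm
    rw [hswap]
    calc (∑ i : Fin n, ∑ j, (if f j = Gen.gQ i then 1 else 0))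
        ≤ ∑ i : Fin n, (if (i:ℕ) < t then 1 else 0) := by
          apply Finset.sum_le_sum
          intro i _
          by_cases hi : (i:ℕ) < t
          · rw [if_pos hi]
            have h1 := Finset.sum_le_sum (fun j (_ : j ∈ Finset.univ) => wQi (f j) i)
            have h2 := le_trans h1 (hco (Sum.inr (Sum.inl i)))
            rw [Ew_x, if_pos hi, ← Finset.mul_sum] at h2
            omega
          · rw [if_neg hi]
            exact le_of_eq (Finset.sum_eq_zero fun j _ => if_neg (hQt j i hi))
      _ = t := sum_ite_lt ht
  exact arith t _ _ _ _ _ _ hTot hA hB hPle hQle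



variable {K : Type*} [Field K]

lemma genv_poly (γ : Gen n) :
    monomial (genv γ) (1:K) = match γ with
      | .gA => va K n ^ 6
      | .gB => va K n ^ 5 * vb K n
      | .gC => va K n * vb K n ^ 5
      | .gD => vb K n ^ 6
      | .gE => va K n ^ 4 * vb K n ^ 4 * vc K n
      | .gF => va K n ^ 4 * vb K n ^ 4 * vd K n
      | .gP i => va K n ^ 4 * vx K n i * vy K n i ^ 2
      | .gQ i => vb K n ^ 4 * vx K n i ^ 2 * vy K n i := by
  have hX : ∀ (v : Vars n), X v = monomial (single v 1) (1:K) := fun v => rfl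
  cases γ <;>
    simp [genv, va, vb, vc, vd, vx, vy, hX, monomial_pow, monomial_mul,
      Finsupp.smul_single, add_assoc]

lemma idealI_eq :
    idealI K n = Ideal.span ((fun e => monomial e (1:K)) '' Set.range (genv (n := n))) := by
  unfold idealI
  congr 1
  ext p
  constructor
  · intro hp
    simp only [Set.mem_union, Set.mem_insert_iff, Set.mem_singleton_iff, Set.mem_range] at hp
    rcases hp with ((h|h|h|h|h|h)|⟨i,h⟩)|⟨i,h⟩
    · exact ⟨genv Gen.gA, ⟨Gen.gA, rfl⟩, by rw [h]; exact genv_poly _⟩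
    · exact ⟨genv Gen.gB, ⟨Gen.gB, rfl⟩, by rw [h]; exact genv_poly _⟩
    · exact ⟨genv Gen.gC, ⟨Gen.gC, rfl⟩, by rw [h]; exact genv_poly _⟩
    · exact ⟨genv Gen.gD, ⟨Gen.gD, rfl⟩, by rw [h]; exact genv_poly _⟩
    · exact ⟨genv Gen.gE, ⟨Gen.gE, rfl⟩, by rw [h]; exact genv_poly _⟩
    · exact ⟨genv Gen.gF, ⟨Gen.gF, rfl⟩, by rw [h]; exact genv_poly _⟩
    · exact ⟨genv (Gen.gP i), ⟨Gen.gP i, rfl⟩, by rw [← h]; exact genv_poly _⟩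
    · exact ⟨genv (Gen.gQ i), ⟨Gen.gQ i, rfl⟩, by rw [← h]; exact genv_poly _⟩
  · rintro ⟨e, ⟨γ, rfl⟩, rfl⟩
    show monomial (genv γ) (1:K) ∈ _
    rw [genv_poly]
    cases γ <;>
      simp [Set.mem_union, Set.mem_insert_iff, Set.mem_range]

/-- sums of `k` generator exponent vectors -/
def SumsOf (n k : ℕ) : Set (Vars n →₀ ℕ) :=
  {s | ∃ f : Fin k → Gen n, s = ∑ j, genv (f j)}

lemma pow_le (k : ℕ) :
    idealI K n ^ k ≤ Ideal.span ((fun e => monomial e (1:K)) '' SumsOf n k) := by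
  induction k with
  | zero =>
    rw [pow_zero, Ideal.one_eq_top]
    have h1 : (1 : MvPolynomial (Vars n) K) ∈
        Ideal.span ((fun e => monomial e (1:K)) '' SumsOf n 0) := by
      apply Ideal.subset_span
      exact ⟨0, ⟨Fin.elim0, by simp⟩, by simp⟩
    intro p _
    have := Ideal.mul_mem_left _ p h1
    simpa using this
  | succ k ih =>
    rw [pow_succ]
    have h2 : idealI K n ^ k * idealI K n ≤
        Ideal.span ((fun e => monomial e (1:K)) '' SumsOf n k) *
        Ideal.span ((fun e => monomial e (1:K)) '' Set.range (genv (n := n))) :=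
      Ideal.mul_mono ih (le_of_eq idealI_eq)
    refine h2.trans ?_
    rw [Ideal.span_mul_span']
    rw [Ideal.span_le]
    rintro x hx
    rw [Set.mem_mul] at hx
    obtain ⟨m1, hm1, m2, hm2, rfl⟩ := hx
    obtain ⟨s, ⟨f, rfl⟩, rfl⟩ := hm1
    obtain ⟨e, ⟨γ, rfl⟩, rfl⟩ := hm2
    apply Ideal.subset_span
    refine ⟨(∑ j, genv (f j)) + genv γ, ⟨Fin.snoc f γ, ?_⟩, by rw [monomial_mul, one_mul]⟩
    rw [Fin.sum_univ_castSucc]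
    simp [Fin.snoc_castSucc, Fin.snoc_last]



variable {K : Type*} [Field K] {n : ℕ}

lemma prod_monomial {ι : Type*} (s : Finset ι) (g : ι → (Vars n →₀ ℕ)) :
    (∏ i ∈ s, monomial (g i) (1:K)) = monomial (∑ i ∈ s, g i) 1 := by
  classical
  induction s using Finset.induction_on with
  | empty => simp [MvPolynomial.monomial_zero']
  | @insert a s' hx ih =>
    rw [Finset.prod_insert hx, Finset.sum_insert hx, ih, monomial_mul, one_mul]

lemma prod_mem_pow {R : Type*} [CommRing R] {ι : Type*} (J : Ideal R) (s : Finset ι) (g : ι → R)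
    (h : ∀ i ∈ s, g i ∈ J) : (∏ i ∈ s, g i) ∈ J ^ s.card := by
  classical
  induction s using Finset.induction_on with
  | empty => simp [Ideal.one_eq_top]
  | @insert a s' hx ih =>
    rw [Finset.prod_insert hx, mul_comm, Finset.card_insert_of_notMem hx, pow_succ]
    exact Ideal.mul_mem_mul (ih (fun i hi => h i (Finset.mem_insert_of_mem hi)))
      (h a (Finset.mem_insert_self a s'))

lemma monomial_mem_of_le (J : Ideal (MvPolynomial (Vars n) K)) {V W : Vars n →₀ ℕ}
    (hVW : V ≤ W) (hV : monomial V (1:K) ∈ J) : monomial W (1:K) ∈ J := by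
  have h : monomial W (1:K) = monomial V 1 * monomial (W - V) 1 := by
    rw [monomial_mul, one_mul, add_tsub_cancel_of_le hVW]
  rw [h]
  exact Ideal.mul_mem_right _ _ hV

lemma gen_mem (γ : Gen n) : monomial (genv γ) (1:K) ∈ idealI K n := by
  rw [idealI_eq]
  exact Ideal.subset_span ⟨genv γ, ⟨γ, rfl⟩, rfl⟩

/-- the first `t` indices -/
def Tt (n t : ℕ) : Finset (Fin n) := Finset.univ.filter (fun i => (i:ℕ) < t)

lemma mem_Tt {t : ℕ} {i : Fin n} : i ∈ Tt n t ↔ (i:ℕ) < t := by simp [Tt]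

lemma card_Tt {t : ℕ} (ht : t ≤ n) : (Tt n t).card = t := by
  have h : Tt n t = (Finset.univ : Finset (Fin t)).map (Fin.castLEEmb ht) := by
    ext i
    simp only [Tt, Finset.mem_filter, Finset.mem_univ, true_and, Finset.mem_map]
    constructor
    · intro hi; exact ⟨⟨i, hi⟩, rfl⟩
    · rintro ⟨j, rfl⟩; exact j.isLt
  rw [h, Finset.card_map, Finset.card_univ, Fintype.card_fin]

/-- sum of the exponent vectors of the pairs `p_i q_i`, `i ∈ s` -/
def pairs (n : ℕ) (s : Finset (Fin n)) : Vars n →₀ ℕ :=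
  ∑ i ∈ s, (genv (Gen.gP i) + genv (Gen.gQ i))

@[simp] lemma pairs_a (s : Finset (Fin n)) : pairs n s (Sum.inl 0) = 4 * s.card := by
  rw [pairs, Finsupp.finset_sum_apply]
  rw [Finset.sum_congr rfl (fun i (_ : i ∈ s) => by
    simp [genv, Finsupp.single_apply] : ∀ i ∈ s, (genv (Gen.gP i) + genv (Gen.gQ i)) (Sum.inl 0) = 4)]
  rw [Finset.sum_const, smul_eq_mul, mul_comm]

@[simp] lemma pairs_b (s : Finset (Fin n)) : pairs n s (Sum.inl 1) = 4 * s.card := by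
  rw [pairs, Finsupp.finset_sum_apply]
  rw [Finset.sum_congr rfl (fun i (_ : i ∈ s) => by
    simp [genv, Finsupp.single_apply] : ∀ i ∈ s, (genv (Gen.gP i) + genv (Gen.gQ i)) (Sum.inl 1) = 4)]
  rw [Finset.sum_const, smul_eq_mul, mul_comm]

@[simp] lemma pairs_c (s : Finset (Fin n)) : pairs n s (Sum.inl 2) = 0 := by
  rw [pairs, Finsupp.finset_sum_apply]
  exact Finset.sum_eq_zero fun i _ => by simp [genv, Finsupp.single_apply]

@[simp] lemma pairs_d (s : Finset (Fin n)) : pairs n s (Sum.inl 3) = 0 := by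
  rw [pairs, Finsupp.finset_sum_apply]
  exact Finset.sum_eq_zero fun i _ => by simp [genv, Finsupp.single_apply]

@[simp] lemma pairs_x (s : Finset (Fin n)) (j : Fin n) :
    pairs n s (Sum.inr (Sum.inl j)) = if j ∈ s then 3 else 0 := by
  rw [pairs, Finsupp.finset_sum_apply]
  rw [Finset.sum_congr rfl (fun i (_ : i ∈ s) => by
    simp [genv, Finsupp.single_apply]
    split_ifs <;> omega
    : ∀ i ∈ s, (genv (Gen.gP i) + genv (Gen.gQ i)) (Sum.inr (Sum.inl j))
        = if i = j then 3 else 0)]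
  rw [Finset.sum_ite_eq' s j (fun _ => 3)]

@[simp] lemma pairs_y (s : Finset (Fin n)) (j : Fin n) :
    pairs n s (Sum.inr (Sum.inr j)) = if j ∈ s then 3 else 0 := by
  rw [pairs, Finsupp.finset_sum_apply]
  rw [Finset.sum_congr rfl (fun i (_ : i ∈ s) => by
    simp [genv, Finsupp.single_apply]
    split_ifs <;> omega
    : ∀ i ∈ s, (genv (Gen.gP i) + genv (Gen.gQ i)) (Sum.inr (Sum.inr j))
        = if i = j then 3 else 0)]
  rw [Finset.sum_ite_eq' s j (fun _ => 3)]

lemma pairs_mem (s : Finset (Fin n)) :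
    monomial (pairs n s) (1:K) ∈ idealI K n ^ (2 * s.card) := by
  rw [pairs, ← prod_monomial]
  have h : ∀ i ∈ s,
      (monomial (genv (Gen.gP i) + genv (Gen.gQ i)) (1:K)) ∈ (idealI K n)^2 := by
    intro i _
    have h2 : monomial (genv (Gen.gP i) + genv (Gen.gQ i)) (1:K)
        = monomial (genv (Gen.gP i)) 1 * monomial (genv (Gen.gQ i)) 1 := by
      rw [monomial_mul, one_mul]
    rw [h2, pow_two]
    exact Ideal.mul_mem_mul (gen_mem _) (gen_mem _)
  have h3 := prod_mem_pow ((idealI K n)^2) s _ h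
  rwa [← pow_mul] at h3

lemma mem_one (δ : Gen n) {t : ℕ} (ht : t ≤ n) :
    monomial (genv δ + pairs n (Tt n t)) (1:K) ∈ idealI K n ^ (2*t+1) := by
  have h : monomial (genv δ + pairs n (Tt n t)) (1:K)
      = monomial (genv δ) 1 * monomial (pairs n (Tt n t)) 1 := by
    rw [monomial_mul, one_mul]
  rw [h]
  have h2 := Ideal.mul_mem_mul (gen_mem (K := K) δ) (pairs_mem (K:=K) (Tt n t))
  rw [card_Tt ht] at h2
  rwa [← pow_succ'] at h2

lemma mem_two (δ ε : Gen n) {t : ℕ} (j : Fin n) (hj : j ∈ Tt n t) (ht : t ≤ n) :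
    monomial (genv δ + (genv ε + genv ε) + pairs n ((Tt n t).erase j)) (1:K)
      ∈ idealI K n ^ (2*t+1) := by
  have ht1 : 1 ≤ t := by have := mem_Tt.mp hj; omega
  have hcard : ((Tt n t).erase j).card = t - 1 := by
    rw [Finset.card_erase_of_mem hj, card_Tt ht]
  have hexp : 2*t+1 = (1+2) + 2*((Tt n t).erase j).card := by rw [hcard]; omega
  have hsplit : monomial (genv δ + (genv ε + genv ε) + pairs n ((Tt n t).erase j)) (1:K)
      = (monomial (genv δ) 1 * (monomial (genv ε) 1 * monomial (genv ε) 1))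
        * monomial (pairs n ((Tt n t).erase j)) 1 := by
    rw [monomial_mul, monomial_mul, monomial_mul]
    norm_num
  rw [hsplit, hexp, pow_add]
  apply Ideal.mul_mem_mul
  · rw [pow_add, pow_one, pow_two]
    exact Ideal.mul_mem_mul (gen_mem δ) (Ideal.mul_mem_mul (gen_mem ε) (gen_mem ε))
  · exact pairs_mem _

/-- The socle property: multiplying the witness by any variable lands in `I^(2t+1)`. -/
lemma socle {t : ℕ} (ht : t ≤ n) (v : Vars n) :
    monomial (Ew n t + Finsupp.single v 1) (1:K) ∈ idealI K n ^ (2*t+1) := by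
  rcases v with m | i | i
  · fin_cases m
    · -- variable a
      apply monomial_mem_of_le _ _ (mem_one Gen.gB ht)
      intro u
      rcases u with m' | j' | j'
      · fin_cases m' <;>
          simp [genv, card_Tt ht, Finsupp.single_apply, mem_Tt] <;> omega
      · simp [genv, Finsupp.single_apply, mem_Tt] <;> split_ifs <;> omega
      · simp [genv, Finsupp.single_apply, mem_Tt] <;> split_ifs <;> omega
    · -- variable b
      apply monomial_mem_of_le _ _ (mem_one Gen.gC ht)
      intro u
      rcases u with m' | j' | j'
      · fin_cases m' <;>
          simp [genv, card_Tt ht, Finsupp.single_apply, mem_Tt] <;> omega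
      · simp [genv, Finsupp.single_apply, mem_Tt] <;> split_ifs <;> omega
      · simp [genv, Finsupp.single_apply, mem_Tt] <;> split_ifs <;> omega
    · -- variable c
      apply monomial_mem_of_le _ _ (mem_one Gen.gE ht)
      intro u
      rcases u with m' | j' | j'
      · fin_cases m' <;>
          simp [genv, card_Tt ht, Finsupp.single_apply, mem_Tt] <;> omega
      · simp [genv, Finsupp.single_apply, mem_Tt] <;> split_ifs <;> omega
      · simp [genv, Finsupp.single_apply, mem_Tt] <;> split_ifs <;> omega
    · -- variable d
      apply monomial_mem_of_le _ _ (mem_one Gen.gF ht)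
      intro u
      rcases u with m' | j' | j'
      · fin_cases m' <;>
          simp [genv, card_Tt ht, Finsupp.single_apply, mem_Tt] <;> omega
      · simp [genv, Finsupp.single_apply, mem_Tt] <;> split_ifs <;> omega
      · simp [genv, Finsupp.single_apply, mem_Tt] <;> split_ifs <;> omega
  · -- variable x_i
    by_cases hit : (i:ℕ) < t
    · apply monomial_mem_of_le _ _ (mem_two Gen.gA (Gen.gQ i) i (mem_Tt.mpr hit) ht)
      intro u
      rcases u with m' | j' | j'
      · fin_cases m' <;>
          simp [genv, Finset.card_erase_of_mem (mem_Tt.mpr hit), card_Tt ht,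
            Finsupp.single_apply, mem_Tt] <;> omega
      · rcases eq_or_ne j' i with rfl | hne
        · simp [genv, Finsupp.single_apply, Finset.mem_erase, hit]
        · simp [genv, Finsupp.single_apply, Finset.mem_erase, hne, Ne.symm hne, mem_Tt] <;>
            split_ifs <;> omega
      · rcases eq_or_ne j' i with rfl | hne
        · simp [genv, Finsupp.single_apply, Finset.mem_erase, hit]
        · simp [genv, Finsupp.single_apply, Finset.mem_erase, hne, Ne.symm hne, mem_Tt] <;>
            split_ifs <;> omega
    · apply monomial_mem_of_le _ _ (mem_one (Gen.gQ i) ht)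
      intro u
      rcases u with m' | j' | j'
      · fin_cases m' <;>
          simp [genv, card_Tt ht, Finsupp.single_apply, mem_Tt] <;> omega
      · rcases eq_or_ne j' i with rfl | hne
        · simp [genv, Finsupp.single_apply, mem_Tt, hit]
        · simp [genv, Finsupp.single_apply, hne, Ne.symm hne, mem_Tt] <;>
            split_ifs <;> omega
      · rcases eq_or_ne j' i with rfl | hne
        · simp [genv, Finsupp.single_apply, mem_Tt, hit]
        · simp [genv, Finsupp.single_apply, hne, Ne.symm hne, mem_Tt] <;>
            split_ifs <;> omega
  · -- variable y_i
    by_cases hit : (i:ℕ) < t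
    · apply monomial_mem_of_le _ _ (mem_two Gen.gD (Gen.gP i) i (mem_Tt.mpr hit) ht)
      intro u
      rcases u with m' | j' | j'
      · fin_cases m' <;>
          simp [genv, Finset.card_erase_of_mem (mem_Tt.mpr hit), card_Tt ht,
            Finsupp.single_apply, mem_Tt] <;> omega
      · rcases eq_or_ne j' i with rfl | hne
        · simp [genv, Finsupp.single_apply, Finset.mem_erase, hit]
        · simp [genv, Finsupp.single_apply, Finset.mem_erase, hne, Ne.symm hne, mem_Tt] <;>
            split_ifs <;> omega
      · rcases eq_or_ne j' i with rfl | hne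
        · simp [genv, Finsupp.single_apply, Finset.mem_erase, hit]
        · simp [genv, Finsupp.single_apply, Finset.mem_erase, hne, Ne.symm hne, mem_Tt] <;>
            split_ifs <;> omega
    · apply monomial_mem_of_le _ _ (mem_one (Gen.gP i) ht)
      intro u
      rcases u with m' | j' | j'
      · fin_cases m' <;>
          simp [genv, card_Tt ht, Finsupp.single_apply, mem_Tt] <;> omega
      · rcases eq_or_ne j' i with rfl | hne
        · simp [genv, Finsupp.single_apply, mem_Tt, hit]
        · simp [genv, Finsupp.single_apply, hne, Ne.symm hne, mem_Tt] <;>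
            split_ifs <;> omega
      · rcases eq_or_ne j' i with rfl | hne
        · simp [genv, Finsupp.single_apply, mem_Tt, hit]
        · simp [genv, Finsupp.single_apply, hne, Ne.symm hne, mem_Tt] <;>
            split_ifs <;> omega

lemma not_mem {t : ℕ} (ht : t ≤ n) :
    monomial (Ew n t) (1:K) ∉ idealI K n ^ (2*t+1) := by
  intro h
  have h2 := pow_le (K:=K) (2*t+1) h
  rw [mem_ideal_span_monomial_image] at h2
  have hsupp : Ew n t ∈ (monomial (Ew n t) (1:K)).support := by
    rw [MvPolynomial.mem_support_iff, coeff_monomial, if_pos rfl]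
    exact one_ne_zero
  obtain ⟨s, ⟨f, rfl⟩, hle⟩ := h2 (Ew n t) hsupp
  exact key ht f hle

lemma mMax_isMaximal : (mMax K n).IsMaximal := by
  have h : mMax K n = RingHom.ker (constantCoeff : MvPolynomial (Vars n) K →+* K) := by
    ext p
    rw [mMax, ← Set.image_univ, mem_ideal_span_X_image, RingHom.mem_ker]
    constructor
    · intro h
      by_contra hc
      have h0 : (0 : Vars n →₀ ℕ) ∈ p.support := by
        rw [MvPolynomial.mem_support_iff]
        simpa [constantCoeff_eq] using hc
      obtain ⟨i, -, hi⟩ := h 0 h0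
      exact hi rfl
    · intro h m hm
      have hm0 : m ≠ 0 := by
        intro h0
        rw [MvPolynomial.mem_support_iff, h0] at hm
        rw [constantCoeff_eq] at h
        exact hm h
      obtain ⟨i, hi⟩ := Finsupp.ne_iff.mp hm0
      exact ⟨i, Set.mem_univ i, by simpa using hi⟩
  rw [h]
  exact RingHom.ker_isMaximal_of_surjective _ (fun a => ⟨C a, constantCoeff_C (σ := Vars n) a⟩)


end BHH

/-- For every odd integer `k` with `1 ≤ k ≤ 2n+1`, the depth of `S/Iᵏ` is `0`;
equivalently, the graded maximal ideal `m` is an associated prime of `S/Iᵏ`. -/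
theorem depth_eq_zero_of_odd (k : ℕ) (hodd : Odd k) (h1 : 1 ≤ k) (h2 : k ≤ 2 * n + 1) :
    depthWrt (mMax K n) (MvPolynomial (Vars n) K ⧸ (idealI K n) ^ k) = 0 ∧
    mMax K n ∈ associatedPrimes (MvPolynomial (Vars n) K)
      (MvPolynomial (Vars n) K ⧸ (idealI K n) ^ k) := by
  classical
  obtain ⟨t, rfl⟩ : ∃ t, k = 2*t+1 := by
    obtain ⟨t, ht'⟩ := hodd; exact ⟨t, by omega⟩
  have ht : t ≤ n := by omega
  set u : MvPolynomial (Vars n) K ⧸ (idealI K n)^(2*t+1) :=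
    Ideal.Quotient.mk ((idealI K n)^(2*t+1)) (monomial (BHH.Ew n t) (1:K)) with hu
  have hu0 : u ≠ 0 := by
    rw [hu, Ne, Ideal.Quotient.eq_zero_iff_mem]
    exact BHH.not_mem ht
  have hmann : mMax K n ≤
      (Submodule.span (MvPolynomial (Vars n) K) {u}).annihilator := by
    rw [mMax, Ideal.span_le]
    rintro _ ⟨v, rfl⟩
    rw [SetLike.mem_coe, Submodule.mem_annihilator_span_singleton, hu]
    have hsm : (X v : MvPolynomial (Vars n) K) •
        (Ideal.Quotient.mk ((idealI K n)^(2*t+1)) (monomial (BHH.Ew n t) (1:K)))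
        = Ideal.Quotient.mk ((idealI K n)^(2*t+1)) (X v * monomial (BHH.Ew n t) 1) := rfl
    rw [hsm, Ideal.Quotient.eq_zero_iff_mem]
    have hxm : X v * monomial (BHH.Ew n t) (1:K)
        = monomial (BHH.Ew n t + Finsupp.single v 1) 1 := by
      have hXv : (X v : MvPolynomial (Vars n) K) = monomial (Finsupp.single v 1) 1 := rfl
      rw [hXv, monomial_mul, one_mul, add_comm]
    rw [hxm]
    exact BHH.socle ht v
  have hmax : (mMax K n).IsMaximal := BHH.mMax_isMaximal
  have hann_ne : (Submodule.span (MvPolynomial (Vars n) K) {u}).annihilator ≠ ⊤ := by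
    intro hT
    have h1 : (1 : MvPolynomial (Vars n) K) ∈
        (Submodule.span (MvPolynomial (Vars n) K) {u}).annihilator := by
      rw [hT]; exact Submodule.mem_top
    rw [Submodule.mem_annihilator_span_singleton, one_smul] at h1
    exact hu0 h1
  have heq : mMax K n = (Submodule.span (MvPolynomial (Vars n) K) {u}).annihilator :=
    hmax.eq_of_le hann_ne hmann
  constructor
  · -- depth is zero
    apply le_antisymm _ (zero_le)
    apply sSup_le
    rintro b ⟨rs, hlen, hmem, hreg⟩
    cases rs with
    | nil =>
      exact le_of_eq (by exact_mod_cast hlen.symm)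
    | cons r rs' =>
      exfalso
      have hw := hreg.toIsWeaklyRegular
      rw [RingTheory.Sequence.isWeaklyRegular_cons_iff] at hw
      have hsr := hw.1
      have hr0 : r • u = 0 :=
        (Submodule.mem_annihilator_span_singleton u r).mp
          (hmann (hmem r (List.mem_cons_self (a := r) (l := rs'))))
      refine hu0 (hsr ?_)
      show r • u = r • (0 : MvPolynomial (Vars n) K ⧸ idealI K n ^ (2*t+1))
      rw [hr0, smul_zero]
  · exact isAssociatedPrime_iff.mpr ⟨hmax.isPrime, u, heq.trans (by
      ext p; simp [Submodule.mem_colon_singleton, Submodule.mem_annihilator_span_singleton])⟩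
end
end

section
/- Let k = 2t−1 be an odd integer with 1 ≤ t ≤ n+1, and let u = a^4 b^4 · (a^4x_1y_1^2)(b^4x_1^2y_1) ⋯ (a^4x_{t-1}y_{t-1}^2)(b^4x_{t-1}^2y_{t-1}) · x_t y_t ⋯ x_n y_n. Then u belongs to the colon ideal I^k : m, i.e., u·m ⊆ I^k. -/
open MvPolynomial

noncomputable section

variable (K : Type*) [Field K] (n : ℕ)

/-- The monomial
`u = a⁴b⁴ ⬝ (a⁴x₁y₁²)(b⁴x₁²y₁) ⋯ (a⁴x_{t-1}y_{t-1}²)(b⁴x_{t-1}²y_{t-1}) ⬝ x_t y_t ⋯ xₙyₙ`. -/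
def uMon (t : ℕ) : MvPolynomial (Vars n) K :=
  va K n ^ 4 * vb K n ^ 4 *
    ∏ i : Fin n,
      if (i : ℕ) < t - 1 then
        (va K n ^ 4 * vx K n i * vy K n i ^ 2) * (vb K n ^ 4 * vx K n i ^ 2 * vy K n i)
      else vx K n i * vy K n i

/- ### Auxiliary lemmas -/

lemma aux_prod_mem_pow {R : Type*} [CommRing R] (I : Ideal R) {ι : Type*} [DecidableEq ι]
    (s : Finset ι) (f : ι → R) (g : ι → ℕ) (h : ∀ i ∈ s, f i ∈ I ^ g i) :
    ∏ i ∈ s, f i ∈ I ^ (∑ i ∈ s, g i) := by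
  induction s using Finset.induction with
  | empty => simp [Ideal.one_eq_top]
  | @insert a s' hx ih =>
      rw [Finset.prod_insert hx, Finset.sum_insert hx, pow_add]
      exact Ideal.mul_mem_mul (h a (Finset.mem_insert_self a s'))
        (ih fun i hi => h i (Finset.mem_insert_of_mem hi))

lemma aux_mul_mem_pow_succ {R : Type*} [CommRing R] {I : Ideal R} {g h : R} {m : ℕ}
    (hg : g ∈ I) (hh : h ∈ I ^ m) : g * h ∈ I ^ (m + 1) := by
  rw [pow_succ]
  exact mul_comm h g ▸ Ideal.mul_mem_mul hh hg

section Gens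

variable {K n}

lemma mem_a6 : va K n ^ 6 ∈ idealI K n :=
  Ideal.subset_span (by left; left; simp)

lemma mem_a5b : va K n ^ 5 * vb K n ∈ idealI K n :=
  Ideal.subset_span (by left; left; simp)

lemma mem_ab5 : va K n * vb K n ^ 5 ∈ idealI K n :=
  Ideal.subset_span (by left; left; simp)

lemma mem_b6 : vb K n ^ 6 ∈ idealI K n :=
  Ideal.subset_span (by left; left; simp)

lemma mem_abc : va K n ^ 4 * vb K n ^ 4 * vc K n ∈ idealI K n :=
  Ideal.subset_span (by left; left; simp)

lemma mem_abd : va K n ^ 4 * vb K n ^ 4 * vd K n ∈ idealI K n :=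
  Ideal.subset_span (by left; left; simp)

lemma mem_axy (i : Fin n) : va K n ^ 4 * vx K n i * vy K n i ^ 2 ∈ idealI K n :=
  Ideal.subset_span (by left; right; exact ⟨i, rfl⟩)

lemma mem_bxy (i : Fin n) : vb K n ^ 4 * vx K n i ^ 2 * vy K n i ∈ idealI K n :=
  Ideal.subset_span (by right; exact ⟨i, rfl⟩)

end Gens

/-- For `k = 2t-1` odd with `1 ≤ t ≤ n+1`, the monomial `u` belongs to the
colon ideal `Iᵏ : m`, i.e. `u ⬝ m ⊆ Iᵏ`. -/
theorem u_mem_colon (t : ℕ) (ht1 : 1 ≤ t) (ht2 : t ≤ n + 1) :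
    uMon K n t ∈ ((idealI K n) ^ (2 * t - 1)).colon (mMax K n) := by
  classical
  set R := MvPolynomial (Vars n) K
  set I : Ideal R := idealI K n with hI
  set k := 2 * t - 1 with hk
  -- the factors of the big product, and their "I-powers"
  set f : Fin n → R := fun i =>
    if (i : ℕ) < t - 1 then
      (va K n ^ 4 * vx K n i * vy K n i ^ 2) * (vb K n ^ 4 * vx K n i ^ 2 * vy K n i)
    else vx K n i * vy K n i with hf
  set g : Fin n → ℕ := fun i => if (i : ℕ) < t - 1 then 2 else 0 with hg
  have hfg : ∀ i ∈ (Finset.univ : Finset (Fin n)), f i ∈ I ^ g i := by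
    intro i _
    simp only [hf, hg]
    split_ifs with h
    · rw [pow_two]; exact Ideal.mul_mem_mul (mem_axy i) (mem_bxy i)
    · simp [Ideal.one_eq_top]
  have hsum : ∑ i : Fin n, g i = 2 * (t - 1) := by
    simp only [hg]
    rw [Fin.sum_univ_eq_sum_range (fun i => if i < t - 1 then 2 else 0) n]
    have h1 : ∀ i ∈ Finset.range n, (if i < t - 1 then (2:ℕ) else 0)
        = if i ∈ Finset.range (t-1) then 2 else 0 := by
      intro i _; simp [Finset.mem_range]
    rw [Finset.sum_congr rfl h1, Finset.sum_ite_mem,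
      Finset.inter_eq_right.mpr (Finset.range_subset_range.mpr (by omega)),
      Finset.sum_const, Finset.card_range, smul_eq_mul]
    omega
  have hP : ∏ i : Fin n, f i ∈ I ^ (2 * (t - 1)) := by
    rw [← hsum]; exact aux_prod_mem_pow I Finset.univ f g hfg
  -- erased products
  have hP' : ∀ i : Fin n, ∏ j ∈ Finset.univ.erase i, f j ∈ I ^ (2 * (t - 1) - g i) := by
    intro i
    have := aux_prod_mem_pow I (Finset.univ.erase i) f g
      (fun j hj => hfg j (Finset.mem_univ j))
    have hsum' : ∑ j ∈ Finset.univ.erase i, g j = 2 * (t - 1) - g i := by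
      have h2 := Finset.add_sum_erase Finset.univ g (Finset.mem_univ i)
      rw [hsum] at h2
      omega
    rwa [hsum'] at this
  have hsplit : ∀ i : Fin n, ∏ j : Fin n, f j = f i * ∏ j ∈ Finset.univ.erase i, f j :=
    fun i => (Finset.mul_prod_erase Finset.univ f (Finset.mem_univ i)).symm
  have hu : uMon K n t = va K n ^ 4 * vb K n ^ 4 * ∏ i : Fin n, f i := rfl
  rw [Submodule.mem_colon]
  intro p hp
  rw [mMax] at hp
  induction hp using Submodule.span_induction with
  | mem x hx =>
      obtain ⟨s, rfl⟩ := hx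
      rw [smul_eq_mul]
      match s with
      | Sum.inl j =>
          fin_cases j
          · -- a : u * a = (a^5 b) * (b^3 * P)
            have he : uMon K n t * va K n =
                (va K n ^ 5 * vb K n) * (vb K n ^ 3 * ∏ i : Fin n, f i) := by
              rw [hu]; ring
            show uMon K n t * va K n ∈ I ^ k
            rw [he]
            have hk' : k = 2 * (t - 1) + 1 := by omega
            rw [hk']
            exact aux_mul_mem_pow_succ mem_a5b (Ideal.mul_mem_left _ _ hP)
          · -- b
            have he : uMon K n t * vb K n =
                (va K n * vb K n ^ 5) * (va K n ^ 3 * ∏ i : Fin n, f i) := by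
              rw [hu]; ring
            show uMon K n t * vb K n ∈ I ^ k
            rw [he]
            have hk' : k = 2 * (t - 1) + 1 := by omega
            rw [hk']
            exact aux_mul_mem_pow_succ mem_ab5 (Ideal.mul_mem_left _ _ hP)
          · -- c
            have he : uMon K n t * vc K n =
                (va K n ^ 4 * vb K n ^ 4 * vc K n) * ∏ i : Fin n, f i := by
              rw [hu]; ring
            show uMon K n t * vc K n ∈ I ^ k
            rw [he]
            have hk' : k = 2 * (t - 1) + 1 := by omega
            rw [hk']
            exact aux_mul_mem_pow_succ mem_abc hP
          · -- d
            have he : uMon K n t * vd K n =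
                (va K n ^ 4 * vb K n ^ 4 * vd K n) * ∏ i : Fin n, f i := by
              rw [hu]; ring
            show uMon K n t * vd K n ∈ I ^ k
            rw [he]
            have hk' : k = 2 * (t - 1) + 1 := by omega
            rw [hk']
            exact aux_mul_mem_pow_succ mem_abd hP
      | Sum.inr (Sum.inl i) =>
          -- x_i
          by_cases hi : (i : ℕ) < t - 1
          · -- block case: u * x_i = (b⁴x²y)·(b⁴x²y)·(a⁶)·(a²y·P')
            have hfi : f i = (va K n ^ 4 * vx K n i * vy K n i ^ 2) *
                (vb K n ^ 4 * vx K n i ^ 2 * vy K n i) := by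
              simp only [hf]; rw [if_pos hi]
            have he : uMon K n t * vx K n i =
                (vb K n ^ 4 * vx K n i ^ 2 * vy K n i) *
                  ((vb K n ^ 4 * vx K n i ^ 2 * vy K n i) *
                    (va K n ^ 6 * (va K n ^ 2 * vy K n i *
                      ∏ j ∈ Finset.univ.erase i, f j))) := by
              rw [hu, hsplit i, hfi]
              ring
            show uMon K n t * vx K n i ∈ I ^ k
            rw [he]
            have hgi : g i = 2 := by simp only [hg]; rw [if_pos hi]
            have hk' : k = (2 * (t - 1) - g i) + 1 + 1 + 1 := by
              rw [hgi]; omega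
            rw [hk']
            exact aux_mul_mem_pow_succ (mem_bxy i)
              (aux_mul_mem_pow_succ (mem_bxy i)
                (aux_mul_mem_pow_succ mem_a6 (Ideal.mul_mem_left _ _ (hP' i))))
          · -- tail case: u * x_i = (b⁴x²y)·(a⁴·P')
            have hfi : f i = vx K n i * vy K n i := by
              simp only [hf]; rw [if_neg hi]
            have he : uMon K n t * vx K n i =
                (vb K n ^ 4 * vx K n i ^ 2 * vy K n i) *
                  (va K n ^ 4 * ∏ j ∈ Finset.univ.erase i, f j) := by
              rw [hu, hsplit i, hfi]
              ring
            show uMon K n t * vx K n i ∈ I ^ k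
            rw [he]
            have hgi : g i = 0 := by simp only [hg]; rw [if_neg hi]
            have hk' : k = (2 * (t - 1) - g i) + 1 := by rw [hgi]; omega
            rw [hk']
            exact aux_mul_mem_pow_succ (mem_bxy i) (Ideal.mul_mem_left _ _ (hP' i))
      | Sum.inr (Sum.inr i) =>
          -- y_i
          by_cases hi : (i : ℕ) < t - 1
          · -- block case: u * y_i = (a⁴xy²)·(a⁴xy²)·(b⁶)·(b²x·P')
            have hfi : f i = (va K n ^ 4 * vx K n i * vy K n i ^ 2) *
                (vb K n ^ 4 * vx K n i ^ 2 * vy K n i) := by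
              simp only [hf]; rw [if_pos hi]
            have he : uMon K n t * vy K n i =
                (va K n ^ 4 * vx K n i * vy K n i ^ 2) *
                  ((va K n ^ 4 * vx K n i * vy K n i ^ 2) *
                    (vb K n ^ 6 * (vb K n ^ 2 * vx K n i *
                      ∏ j ∈ Finset.univ.erase i, f j))) := by
              rw [hu, hsplit i, hfi]
              ring
            show uMon K n t * vy K n i ∈ I ^ k
            rw [he]
            have hgi : g i = 2 := by simp only [hg]; rw [if_pos hi]
            have hk' : k = (2 * (t - 1) - g i) + 1 + 1 + 1 := by
              rw [hgi]; omega
            rw [hk']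
            exact aux_mul_mem_pow_succ (mem_axy i)
              (aux_mul_mem_pow_succ (mem_axy i)
                (aux_mul_mem_pow_succ mem_b6 (Ideal.mul_mem_left _ _ (hP' i))))
          · -- tail case: u * y_i = (a⁴xy²)·(b⁴·P')
            have hfi : f i = vx K n i * vy K n i := by
              simp only [hf]; rw [if_neg hi]
            have he : uMon K n t * vy K n i =
                (va K n ^ 4 * vx K n i * vy K n i ^ 2) *
                  (vb K n ^ 4 * ∏ j ∈ Finset.univ.erase i, f j) := by
              rw [hu, hsplit i, hfi]
              ring
            show uMon K n t * vy K n i ∈ I ^ k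
            rw [he]
            have hgi : g i = 0 := by simp only [hg]; rw [if_neg hi]
            have hk' : k = (2 * (t - 1) - g i) + 1 := by rw [hgi]; omega
            rw [hk']
            exact aux_mul_mem_pow_succ (mem_axy i) (Ideal.mul_mem_left _ _ (hP' i))
  | zero => simp
  | add x y _ _ hx hy => rw [smul_add]; exact add_mem hx hy
  | smul r x _ hx => rw [smul_comm]; exact Submodule.smul_mem _ r hx
end
end

section
/- Let k = 2t−1 be an odd integer with 1 ≤ t ≤ n+1, and let u = a^4 b^4 · (a^4x_1y_1^2)(b^4x_1^2y_1) ⋯ (a^4x_{t-1}y_{t-1}^2)(b^4x_{t-1}^2y_{t-1}) · x_t y_t ⋯ x_n y_n. Then u does not belong to I^k. -/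
open MvPolynomial

noncomputable section

variable (K : Type*) [Field K] (n : ℕ)

/-! ### auxiliary -/

def gA (i : Fin n) : Vars n →₀ ℕ :=
  Finsupp.single (Sum.inl 0) 4 + Finsupp.single (Sum.inr (Sum.inl i)) 1 +
    Finsupp.single (Sum.inr (Sum.inr i)) 2

def gB (i : Fin n) : Vars n →₀ ℕ :=
  Finsupp.single (Sum.inl 1) 4 + Finsupp.single (Sum.inr (Sum.inl i)) 2 +
    Finsupp.single (Sum.inr (Sum.inr i)) 1

def genE : Set (Vars n →₀ ℕ) :=
  ({Finsupp.single (Sum.inl 0) 6,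
    Finsupp.single (Sum.inl 0) 5 + Finsupp.single (Sum.inl 1) 1,
    Finsupp.single (Sum.inl 0) 1 + Finsupp.single (Sum.inl 1) 5,
    Finsupp.single (Sum.inl 1) 6,
    Finsupp.single (Sum.inl 0) 4 + Finsupp.single (Sum.inl 1) 4 + Finsupp.single (Sum.inl 2) 1,
    Finsupp.single (Sum.inl 0) 4 + Finsupp.single (Sum.inl 1) 4 + Finsupp.single (Sum.inl 3) 1} :
      Set (Vars n →₀ ℕ)) ∪ Set.range (gA n) ∪ Set.range (gB n)

lemma X_eq_mon (s : Vars n) : (X s : MvPolynomial (Vars n) K) = monomial (Finsupp.single s 1) 1 := by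
  rw [← pow_one (X s), X_pow_eq_monomial]

lemma gen_a_eq (i : Fin n) :
    va K n ^ 4 * vx K n i * vy K n i ^ 2 = monomial (gA n i) (1 : K) := by
  rw [va, vx, vy, ← pow_one (X (Sum.inr (Sum.inl i)) : MvPolynomial (Vars n) K)]
  simp only [X_pow_eq_monomial, monomial_mul, mul_one, gA]

lemma gen_b_eq (i : Fin n) :
    vb K n ^ 4 * vx K n i ^ 2 * vy K n i = monomial (gB n i) (1 : K) := by
  rw [vb, vx, vy, ← pow_one (X (Sum.inr (Sum.inr i)) : MvPolynomial (Vars n) K)]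
  simp only [X_pow_eq_monomial, monomial_mul, mul_one, gB]

lemma idealI_eq : idealI K n = Ideal.span ((fun e => monomial e (1 : K)) '' genE n) := by
  unfold idealI genE
  congr 1
  rw [Set.image_union, Set.image_union, ← Set.range_comp, ← Set.range_comp]
  have e1 : va K n ^ 6 = monomial (Finsupp.single (Sum.inl 0) 6) (1 : K) := by
    rw [va, X_pow_eq_monomial]
  have e4 : vb K n ^ 6 = monomial (Finsupp.single (Sum.inl 1) 6) (1 : K) := by
    rw [vb, X_pow_eq_monomial]
  have e2 : va K n ^ 5 * vb K n = monomial (Finsupp.single (Sum.inl 0) 5 +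
      Finsupp.single (Sum.inl 1) 1) (1 : K) := by
    rw [va, vb, ← pow_one (X (Sum.inl 1) : MvPolynomial (Vars n) K)]
    simp only [X_pow_eq_monomial, monomial_mul, mul_one]
  have e3 : va K n * vb K n ^ 5 = monomial (Finsupp.single (Sum.inl 0) 1 +
      Finsupp.single (Sum.inl 1) 5) (1 : K) := by
    rw [va, vb, ← pow_one (X (Sum.inl 0) : MvPolynomial (Vars n) K)]
    simp only [X_pow_eq_monomial, monomial_mul, mul_one]
  have e5 : va K n ^ 4 * vb K n ^ 4 * vc K n = monomial (Finsupp.single (Sum.inl 0) 4 +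
      Finsupp.single (Sum.inl 1) 4 + Finsupp.single (Sum.inl 2) 1) (1 : K) := by
    rw [va, vb, vc, ← pow_one (X (Sum.inl 2) : MvPolynomial (Vars n) K)]
    simp only [X_pow_eq_monomial, monomial_mul, mul_one]
  have e6 : va K n ^ 4 * vb K n ^ 4 * vd K n = monomial (Finsupp.single (Sum.inl 0) 4 +
      Finsupp.single (Sum.inl 1) 4 + Finsupp.single (Sum.inl 3) 1) (1 : K) := by
    rw [va, vb, vd, ← pow_one (X (Sum.inl 3) : MvPolynomial (Vars n) K)]
    simp only [X_pow_eq_monomial, monomial_mul, mul_one]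
  congr 1
  · congr 1
    · simp only [Set.image_insert_eq, Set.image_singleton, e1, e2, e3, e4, e5, e6]
    · ext p
      simp only [Set.mem_range, Function.comp_apply]
      constructor
      · rintro ⟨i, rfl⟩; exact ⟨i, (gen_a_eq K n i).symm⟩
      · rintro ⟨i, rfl⟩; exact ⟨i, gen_a_eq K n i⟩
  · ext p
    simp only [Set.mem_range, Function.comp_apply]
    constructor
    · rintro ⟨i, rfl⟩; exact ⟨i, (gen_b_eq K n i).symm⟩
    · rintro ⟨i, rfl⟩; exact ⟨i, gen_b_eq K n i⟩

def expE (t : ℕ) (i : Fin n) : Vars n →₀ ℕ :=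
  if (i : ℕ) < t - 1 then
    Finsupp.single (Sum.inl 0) 4 + Finsupp.single (Sum.inl 1) 4 +
      Finsupp.single (Sum.inr (Sum.inl i)) 3 + Finsupp.single (Sum.inr (Sum.inr i)) 3
  else Finsupp.single (Sum.inr (Sum.inl i)) 1 + Finsupp.single (Sum.inr (Sum.inr i)) 1

def expU (t : ℕ) : Vars n →₀ ℕ :=
  Finsupp.single (Sum.inl 0) 4 + Finsupp.single (Sum.inl 1) 4 + ∑ i : Fin n, expE n t i

lemma prod_monomial {ι σ K : Type*} [CommSemiring K] (s : Finset ι) (e : ι → (σ →₀ ℕ)) :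
    (∏ i ∈ s, monomial (e i) (1 : K)) = monomial (∑ i ∈ s, e i) 1 := by
  induction s using Finset.cons_induction with
  | empty => simp
  | cons a s ha ih => rw [Finset.prod_cons, Finset.sum_cons, ih, monomial_mul, one_mul]

lemma uMon_eq (t : ℕ) : uMon K n t = monomial (expU n t) (1 : K) := by
  have h : ∀ i : Fin n, (if (i : ℕ) < t - 1 then
        (va K n ^ 4 * vx K n i * vy K n i ^ 2) * (vb K n ^ 4 * vx K n i ^ 2 * vy K n i)
      else vx K n i * vy K n i) = monomial (expE n t i) (1 : K) := by
    intro i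
    unfold expE
    split
    · rw [gen_a_eq, gen_b_eq, monomial_mul, mul_one]
      congr 1
      unfold gA gB
      rw [show (3 : ℕ) = 1 + 2 from rfl, Finsupp.single_add, Finsupp.single_add]
      abel
    · rw [vx, vy, ← pow_one (X (Sum.inr (Sum.inl i)) : MvPolynomial (Vars n) K),
        ← pow_one (X (Sum.inr (Sum.inr i)) : MvPolynomial (Vars n) K)]
      simp only [X_pow_eq_monomial, monomial_mul, mul_one]
  rw [uMon, Finset.prod_congr rfl (fun i _ => h i), prod_monomial, va, vb]
  simp only [X_pow_eq_monomial, monomial_mul, mul_one, expU]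

lemma card_filter_lt (m : ℕ) (h : m ≤ n) :
    ((Finset.univ : Finset (Fin n)).filter (fun i : Fin n => (i : ℕ) < m)).card = m := by
  have hmap : Finset.map Fin.valEmbedding
      (((Finset.univ : Finset (Fin n)).filter (fun i : Fin n => (i : ℕ) < m))) = Finset.range m := by
    ext j
    simp only [Finset.mem_map, Finset.mem_filter, Finset.mem_univ, true_and,
      Fin.valEmbedding_apply, Finset.mem_range]
    constructor
    · rintro ⟨i, hi, rfl⟩; exact hi
    · intro hj; exact ⟨⟨j, lt_of_lt_of_le hj h⟩, hj, rfl⟩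
  rw [← Finset.card_map Fin.valEmbedding, hmap, Finset.card_range]

lemma ne01 : (Sum.inl 0 : Vars n) ≠ Sum.inl 1 := by simp [Fin.ext_iff]

lemma expE_apply_a (t : ℕ) (i : Fin n) :
    expE n t i (Sum.inl 0) = if (i : ℕ) < t - 1 then 4 else 0 := by
  unfold expE
  split <;> simp [Finsupp.single_apply, Fin.ext_iff]

lemma expE_apply_b (t : ℕ) (i : Fin n) :
    expE n t i (Sum.inl 1) = if (i : ℕ) < t - 1 then 4 else 0 := by
  unfold expE
  split <;> simp [Finsupp.single_apply, Fin.ext_iff]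

lemma expE_apply_c (t : ℕ) (i : Fin n) : expE n t i (Sum.inl 2) = 0 := by
  unfold expE
  split <;> simp [Finsupp.single_apply, Fin.ext_iff] <;> decide

lemma expE_apply_d (t : ℕ) (i : Fin n) : expE n t i (Sum.inl 3) = 0 := by
  unfold expE
  split <;> simp [Finsupp.single_apply, Fin.ext_iff] <;> decide

lemma expE_apply_x (t : ℕ) (i i0 : Fin n) :
    expE n t i (Sum.inr (Sum.inl i0)) =
      if i = i0 then (if (i : ℕ) < t - 1 then 3 else 1) else 0 := by
  unfold expE
  split <;> simp [Finsupp.single_apply] <;> split <;> simp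

lemma expE_apply_y (t : ℕ) (i i0 : Fin n) :
    expE n t i (Sum.inr (Sum.inr i0)) =
      if i = i0 then (if (i : ℕ) < t - 1 then 3 else 1) else 0 := by
  unfold expE
  split <;> simp [Finsupp.single_apply] <;> split <;> simp

lemma expU_apply_a (t : ℕ) (h : t - 1 ≤ n) : expU n t (Sum.inl 0) = 4 + 4 * (t - 1) := by
  rw [expU]
  simp only [Finsupp.add_apply, Finsupp.finset_sum_apply, expE_apply_a,
    Finsupp.single_apply]
  rw [Finset.sum_ite, Finset.sum_const, Finset.sum_const, smul_eq_mul, smul_eq_mul,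
    mul_zero, add_zero, card_filter_lt n (t - 1) h]
  simp [Fin.ext_iff, mul_comm]

lemma expU_apply_b (t : ℕ) (h : t - 1 ≤ n) : expU n t (Sum.inl 1) = 4 + 4 * (t - 1) := by
  rw [expU]
  simp only [Finsupp.add_apply, Finsupp.finset_sum_apply, expE_apply_b,
    Finsupp.single_apply]
  rw [Finset.sum_ite, Finset.sum_const, Finset.sum_const, smul_eq_mul, smul_eq_mul,
    mul_zero, add_zero, card_filter_lt n (t - 1) h]
  simp [Fin.ext_iff, mul_comm]

lemma expU_apply_c (t : ℕ) : expU n t (Sum.inl 2) = 0 := by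
  rw [expU]
  simp only [Finsupp.add_apply, Finsupp.finset_sum_apply, expE_apply_c,
    Finset.sum_const_zero, add_zero, Finsupp.single_apply]
  rw [if_neg (fun h => absurd (Sum.inl.inj h) (by decide)),
    if_neg (fun h => absurd (Sum.inl.inj h) (by decide))]
  rfl


lemma expU_apply_d (t : ℕ) : expU n t (Sum.inl 3) = 0 := by
  rw [expU]
  simp only [Finsupp.add_apply, Finsupp.finset_sum_apply, expE_apply_d,
    Finset.sum_const_zero, add_zero, Finsupp.single_apply]
  rw [if_neg (fun h => absurd (Sum.inl.inj h) (by decide)),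
    if_neg (fun h => absurd (Sum.inl.inj h) (by decide))]
  rfl

lemma expU_apply_x (t : ℕ) (i0 : Fin n) :
    expU n t (Sum.inr (Sum.inl i0)) = if (i0 : ℕ) < t - 1 then 3 else 1 := by
  rw [expU]
  simp only [Finsupp.add_apply, Finsupp.finset_sum_apply, expE_apply_x, Finsupp.single_apply]
  rw [Finset.sum_ite_eq' Finset.univ i0 (fun i => if (i : ℕ) < t - 1 then 3 else 1)]
  simp

lemma expU_apply_y (t : ℕ) (i0 : Fin n) :
    expU n t (Sum.inr (Sum.inr i0)) = if (i0 : ℕ) < t - 1 then 3 else 1 := by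
  rw [expU]
  simp only [Finsupp.add_apply, Finsupp.finset_sum_apply, expE_apply_y, Finsupp.single_apply]
  rw [Finset.sum_ite_eq' Finset.univ i0 (fun i => if (i : ℕ) < t - 1 then 3 else 1)]
  simp

lemma gA_apply_a (i : Fin n) : gA n i (Sum.inl 0) = 4 := by
  simp [gA, Finsupp.single_apply]
lemma gA_apply_b (i : Fin n) : gA n i (Sum.inl 1) = 0 := by
  simp [gA, Finsupp.single_apply, Fin.ext_iff]
lemma gA_apply_y (i i0 : Fin n) :
    gA n i (Sum.inr (Sum.inr i0)) = if i = i0 then 2 else 0 := by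
  simp only [gA, Finsupp.add_apply, Finsupp.single_apply]
  split <;> simp_all
lemma gB_apply_a (i : Fin n) : gB n i (Sum.inl 0) = 0 := by
  simp [gB, Finsupp.single_apply, Fin.ext_iff]
lemma gB_apply_b (i : Fin n) : gB n i (Sum.inl 1) = 4 := by
  simp [gB, Finsupp.single_apply]
lemma gB_apply_x (i i0 : Fin n) :
    gB n i (Sum.inr (Sum.inl i0)) = if i = i0 then 2 else 0 := by
  simp only [gB, Finsupp.add_apply, Finsupp.single_apply]
  split <;> simp_all

lemma exists_of_mem_pow {σ K : Type*} [Field K] {E : Set (σ →₀ ℕ)} :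
    ∀ (k : ℕ) (p : MvPolynomial σ K),
      p ∈ (Ideal.span ((fun e => monomial e (1 : K)) '' E)) ^ k →
      ∀ m ∈ p.support, ∃ l : Fin k → (σ →₀ ℕ), (∀ j, l j ∈ E) ∧ (∑ j, l j) ≤ m := by
  classical
  intro k
  induction k with
  | zero =>
    intro p _ m _
    exact ⟨fun j => j.elim0, fun j => j.elim0, by simp⟩
  | succ k ih =>
    intro p hp
    rw [pow_succ] at hp
    refine Submodule.mul_induction_on hp ?_ ?_
    · intro f hf g hg m hm
      obtain ⟨m1, hm1, m2, hm2, rfl⟩ := Finset.mem_add.mp (support_mul f g hm)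
      obtain ⟨l, hl, hle⟩ := ih f hf m1 hm1
      obtain ⟨e, he, hee⟩ := mem_ideal_span_monomial_image.mp hg m2 hm2
      refine ⟨Fin.snoc l e, ?_, ?_⟩
      · intro j
        refine Fin.lastCases ?_ (fun i => ?_) j
        · simpa using he
        · simpa using hl i
      · rw [Fin.sum_univ_castSucc]
        simp only [Fin.snoc_castSucc, Fin.snoc_last]
        exact add_le_add hle hee
    · intro f g hf hg m hm
      rcases Finset.mem_union.mp (MvPolynomial.support_add hm) with h | h
      · exact hf m h
      · exact hg m h

/-- For `k = 2t-1` odd with `1 ≤ t ≤ n+1`, the monomial `u` does not belong to `Iᵏ`. -/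
theorem u_not_mem_pow (t : ℕ) (ht1 : 1 ≤ t) (ht2 : t ≤ n + 1) :
    uMon K n t ∉ ((idealI K n) ^ (2 * t - 1) : Ideal (MvPolynomial (Vars n) K)) := by
  classical
  intro hmem
  rw [idealI_eq, uMon_eq] at hmem
  have hsupp : expU n t ∈ (monomial (expU n t) (1 : K)).support := by
    rw [support_monomial, if_neg one_ne_zero]
    exact Finset.mem_singleton_self _
  obtain ⟨l, hl, hle⟩ := exists_of_mem_pow (2 * t - 1) _ hmem (expU n t) hsupp
  have hcoord : ∀ s, (∑ j, l j s) ≤ expU n t s := by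
    intro s
    have h := Finsupp.le_def.mp hle s
    rwa [Finsupp.finset_sum_apply] at h
  have hc : ∀ j, l j (Sum.inl 2) = 0 := by
    intro j
    have h := hcoord (Sum.inl 2)
    rw [expU_apply_c] at h
    exact Finset.sum_eq_zero_iff.mp (Nat.le_zero.mp h) j (Finset.mem_univ j)
  have hd : ∀ j, l j (Sum.inl 3) = 0 := by
    intro j
    have h := hcoord (Sum.inl 3)
    rw [expU_apply_d] at h
    exact Finset.sum_eq_zero_iff.mp (Nat.le_zero.mp h) j (Finset.mem_univ j)
  have htri : ∀ j, (l j (Sum.inl 0) + l j (Sum.inl 1) = 6 ∧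
      (5 ≤ l j (Sum.inl 0) ∨ 5 ≤ l j (Sum.inl 1)))
      ∨ (∃ i, l j = gA n i) ∨ (∃ i, l j = gB n i) := by
    intro j
    have hj := hl j
    simp only [genE, Set.mem_union, Set.mem_insert_iff, Set.mem_singleton_iff,
      Set.mem_range] at hj
    rcases hj with ((h | h | h | h | h | h) | h) | h
    · left
      rw [h]
      refine ⟨?_, Or.inl ?_⟩ <;> simp [Finsupp.single_apply, Fin.ext_iff]
    · left
      rw [h]
      refine ⟨?_, Or.inl ?_⟩ <;> simp [Finsupp.single_apply, Fin.ext_iff]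
    · left
      rw [h]
      refine ⟨?_, Or.inr ?_⟩ <;> simp [Finsupp.single_apply, Fin.ext_iff]
    · left
      rw [h]
      refine ⟨?_, Or.inr ?_⟩ <;> simp [Finsupp.single_apply, Fin.ext_iff]
    · exfalso
      have hcj := hc j
      rw [h] at hcj
      simp [Finsupp.single_apply, Fin.ext_iff] at hcj
    · exfalso
      have hdj := hd j
      rw [h] at hdj
      simp [Finsupp.single_apply, Fin.ext_iff] at hdj
    · exact Or.inr (Or.inl ⟨h.choose, h.choose_spec.symm⟩)
    · exact Or.inr (Or.inr ⟨h.choose, h.choose_spec.symm⟩)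
  have hga : ∀ j i, l j = gA n i → l j (Sum.inl 0) = 4 ∧ l j (Sum.inl 1) = 0 := by
    intro j i h
    rw [h]
    exact ⟨gA_apply_a n i, gA_apply_b n i⟩
  have hgb : ∀ j i, l j = gB n i → l j (Sum.inl 0) = 0 ∧ l j (Sum.inl 1) = 4 := by
    intro j i h
    rw [h]
    exact ⟨gB_apply_a n i, gB_apply_b n i⟩
  set P := Finset.univ.filter (fun j : Fin (2 * t - 1) =>
    l j (Sum.inl 0) + l j (Sum.inl 1) = 6) with hP
  set Qa := Finset.univ.filter (fun j : Fin (2 * t - 1) => l j (Sum.inl 0) = 4) with hQa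
  set Qb := Finset.univ.filter (fun j : Fin (2 * t - 1) => l j (Sum.inl 1) = 4) with hQb
  have hone : ∀ j : Fin (2 * t - 1),
      ((if l j (Sum.inl 0) + l j (Sum.inl 1) = 6 then 1 else 0) +
       (if l j (Sum.inl 0) = 4 then 1 else 0)) +
       (if l j (Sum.inl 1) = 4 then 1 else 0) = 1 := by
    intro j
    rcases htri j with ⟨h1, h2⟩ | ⟨i, hi⟩ | ⟨i, hi⟩
    · split_ifs <;> omega
    · have := hga j i hi
      split_ifs <;> omega
    · have := hgb j i hi
      split_ifs <;> omega
  have hpart : P.card + Qa.card + Qb.card = 2 * t - 1 := by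
    rw [hP, hQa, hQb, Finset.card_filter, Finset.card_filter, Finset.card_filter,
      ← Finset.sum_add_distrib, ← Finset.sum_add_distrib,
      Finset.sum_congr rfl (fun j _ => hone j), Finset.sum_const, smul_eq_mul, mul_one,
      Finset.card_univ, Fintype.card_fin]
  have hAsum : (∑ j, l j (Sum.inl 0)) ≤ 4 + 4 * (t - 1) := by
    have h := hcoord (Sum.inl 0)
    rwa [expU_apply_a n t (by omega)] at h
  have hBsum : (∑ j, l j (Sum.inl 1)) ≤ 4 + 4 * (t - 1) := by
    have h := hcoord (Sum.inl 1)
    rwa [expU_apply_b n t (by omega)] at h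
  have hdisjPQa : Disjoint P Qa := by
    rw [Finset.disjoint_left]
    intro j hjP hjQa
    have h1 := (Finset.mem_filter.mp hjP).2
    have h2 := (Finset.mem_filter.mp hjQa).2
    rcases htri j with ⟨_, h5⟩ | ⟨i, hi⟩ | ⟨i, hi⟩
    · omega
    · have := hga j i hi; omega
    · have := hgb j i hi; omega
  have hdisjPQb : Disjoint P Qb := by
    rw [Finset.disjoint_left]
    intro j hjP hjQb
    have h1 := (Finset.mem_filter.mp hjP).2
    have h2 := (Finset.mem_filter.mp hjQb).2
    rcases htri j with ⟨_, h5⟩ | ⟨i, hi⟩ | ⟨i, hi⟩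
    · omega
    · have := hga j i hi; omega
    · have := hgb j i hi; omega
  have hsum_a : (∑ j ∈ P, l j (Sum.inl 0)) + 4 * Qa.card ≤ 4 + 4 * (t - 1) := by
    have hsub : (∑ j ∈ P ∪ Qa, l j (Sum.inl 0)) ≤ ∑ j, l j (Sum.inl 0) :=
      Finset.sum_le_sum_of_subset (Finset.subset_univ _)
    rw [Finset.sum_union hdisjPQa] at hsub
    have h4 : (∑ j ∈ Qa, l j (Sum.inl 0)) = 4 * Qa.card := by
      rw [Finset.sum_congr rfl (fun j hj => (Finset.mem_filter.mp hj).2),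
        Finset.sum_const, smul_eq_mul, mul_comm]
    omega
  have hsum_b : (∑ j ∈ P, l j (Sum.inl 1)) + 4 * Qb.card ≤ 4 + 4 * (t - 1) := by
    have hsub : (∑ j ∈ P ∪ Qb, l j (Sum.inl 1)) ≤ ∑ j, l j (Sum.inl 1) :=
      Finset.sum_le_sum_of_subset (Finset.subset_univ _)
    rw [Finset.sum_union hdisjPQb] at hsub
    have h4 : (∑ j ∈ Qb, l j (Sum.inl 1)) = 4 * Qb.card := by
      rw [Finset.sum_congr rfl (fun j hj => (Finset.mem_filter.mp hj).2),
        Finset.sum_const, smul_eq_mul, mul_comm]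
    omega
  have h6 : (∑ j ∈ P, l j (Sum.inl 0)) + (∑ j ∈ P, l j (Sum.inl 1)) = 6 * P.card := by
    rw [← Finset.sum_add_distrib,
      Finset.sum_congr rfl (fun j hj => (Finset.mem_filter.mp hj).2),
      Finset.sum_const, smul_eq_mul, mul_comm]
  have hmemQa : ∀ j ∈ Qa, ∃ i, l j = gA n i := by
    intro j hj
    have h2 := (Finset.mem_filter.mp hj).2
    rcases htri j with ⟨h1, h5⟩ | h | ⟨i, hi⟩
    · omega
    · exact h
    · have := hgb j i hi; omega
  have hmemQb : ∀ j ∈ Qb, ∃ i, l j = gB n i := by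
    intro j hj
    have h2 := (Finset.mem_filter.mp hj).2
    rcases htri j with ⟨h1, h5⟩ | ⟨i, hi⟩ | h
    · omega
    · have := hga j i hi; omega
    · exact h
  have hqa : Qa.card ≤ t - 1 := by
    rw [← Finset.card_range (t - 1)]
    apply Finset.card_le_card_of_injOn
      (fun j => if h : ∃ i, l j = gA n i then ((h.choose : Fin n) : ℕ) else 0)
    · intro j hj
      have h := hmemQa j hj
      obtain ⟨i, hi, hival⟩ : ∃ i : Fin n, l j = gA n i ∧
          (if h' : ∃ i, l j = gA n i then ((h'.choose : Fin n) : ℕ) else 0) = (i : ℕ) :=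
        ⟨h.choose, h.choose_spec, dif_pos h⟩
      show (if h' : ∃ i, l j = gA n i then ((h'.choose : Fin n) : ℕ) else 0) ∈
        Finset.range (t - 1)
      rw [hival, Finset.mem_range]
      have h2 : l j (Sum.inr (Sum.inr i)) = 2 := by
        rw [hi, gA_apply_y, if_pos rfl]
      have hle2 : l j (Sum.inr (Sum.inr i)) ≤ ∑ j', l j' (Sum.inr (Sum.inr i)) :=
        Finset.single_le_sum (f := fun j' => l j' (Sum.inr (Sum.inr i)))
          (fun _ _ => Nat.zero_le _) (Finset.mem_univ j)
      have hle3 := le_trans hle2 (hcoord (Sum.inr (Sum.inr i)))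
      rw [h2, expU_apply_y] at hle3
      by_contra hlt
      rw [if_neg (by omega)] at hle3
      omega
    · intro j1 hj1 j2 hj2 hf
      have h1 := hmemQa j1 (Finset.mem_coe.mp hj1)
      have h2 := hmemQa j2 (Finset.mem_coe.mp hj2)
      obtain ⟨i1, hi1, hv1⟩ : ∃ i : Fin n, l j1 = gA n i ∧
          (if h' : ∃ i, l j1 = gA n i then ((h'.choose : Fin n) : ℕ) else 0) = (i : ℕ) :=
        ⟨h1.choose, h1.choose_spec, dif_pos h1⟩
      obtain ⟨i2, hi2, hv2⟩ : ∃ i : Fin n, l j2 = gA n i ∧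
          (if h' : ∃ i, l j2 = gA n i then ((h'.choose : Fin n) : ℕ) else 0) = (i : ℕ) :=
        ⟨h2.choose, h2.choose_spec, dif_pos h2⟩
      simp only at hf
      rw [hv1, hv2] at hf
      have hii : i1 = i2 := Fin.val_injective hf
      subst hii
      by_contra hne
      have hy := hcoord (Sum.inr (Sum.inr i1))
      have c1 : l j1 (Sum.inr (Sum.inr i1)) = 2 := by rw [hi1, gA_apply_y, if_pos rfl]
      have c2 : l j2 (Sum.inr (Sum.inr i1)) = 2 := by rw [hi2, gA_apply_y, if_pos rfl]
      have hsub2 : (∑ jj ∈ ({j1, j2} : Finset (Fin (2 * t - 1))),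
          l jj (Sum.inr (Sum.inr i1))) ≤ ∑ j', l j' (Sum.inr (Sum.inr i1)) :=
        Finset.sum_le_sum_of_subset (Finset.subset_univ _)
      rw [Finset.sum_pair hne] at hsub2
      simp only [c1, c2] at hsub2
      rw [expU_apply_y] at hy
      have h3 : (if (i1 : ℕ) < t - 1 then 3 else 1) ≤ 3 := by split <;> omega
      omega
  have hqb : Qb.card ≤ t - 1 := by
    rw [← Finset.card_range (t - 1)]
    apply Finset.card_le_card_of_injOn
      (fun j => if h : ∃ i, l j = gB n i then ((h.choose : Fin n) : ℕ) else 0)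
    · intro j hj
      have h := hmemQb j hj
      obtain ⟨i, hi, hival⟩ : ∃ i : Fin n, l j = gB n i ∧
          (if h' : ∃ i, l j = gB n i then ((h'.choose : Fin n) : ℕ) else 0) = (i : ℕ) :=
        ⟨h.choose, h.choose_spec, dif_pos h⟩
      show (if h' : ∃ i, l j = gB n i then ((h'.choose : Fin n) : ℕ) else 0) ∈
        Finset.range (t - 1)
      rw [hival, Finset.mem_range]
      have h2 : l j (Sum.inr (Sum.inl i)) = 2 := by
        rw [hi, gB_apply_x, if_pos rfl]
      have hle2 : l j (Sum.inr (Sum.inl i)) ≤ ∑ j', l j' (Sum.inr (Sum.inl i)) :=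
        Finset.single_le_sum (f := fun j' => l j' (Sum.inr (Sum.inl i)))
          (fun _ _ => Nat.zero_le _) (Finset.mem_univ j)
      have hle3 := le_trans hle2 (hcoord (Sum.inr (Sum.inl i)))
      rw [h2, expU_apply_x] at hle3
      by_contra hlt
      rw [if_neg (by omega)] at hle3
      omega
    · intro j1 hj1 j2 hj2 hf
      have h1 := hmemQb j1 (Finset.mem_coe.mp hj1)
      have h2 := hmemQb j2 (Finset.mem_coe.mp hj2)
      obtain ⟨i1, hi1, hv1⟩ : ∃ i : Fin n, l j1 = gB n i ∧
          (if h' : ∃ i, l j1 = gB n i then ((h'.choose : Fin n) : ℕ) else 0) = (i : ℕ) :=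
        ⟨h1.choose, h1.choose_spec, dif_pos h1⟩
      obtain ⟨i2, hi2, hv2⟩ : ∃ i : Fin n, l j2 = gB n i ∧
          (if h' : ∃ i, l j2 = gB n i then ((h'.choose : Fin n) : ℕ) else 0) = (i : ℕ) :=
        ⟨h2.choose, h2.choose_spec, dif_pos h2⟩
      simp only at hf
      rw [hv1, hv2] at hf
      have hii : i1 = i2 := Fin.val_injective hf
      subst hii
      by_contra hne
      have hy := hcoord (Sum.inr (Sum.inl i1))
      have c1 : l j1 (Sum.inr (Sum.inl i1)) = 2 := by rw [hi1, gB_apply_x, if_pos rfl]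
      have c2 : l j2 (Sum.inr (Sum.inl i1)) = 2 := by rw [hi2, gB_apply_x, if_pos rfl]
      have hsub2 : (∑ jj ∈ ({j1, j2} : Finset (Fin (2 * t - 1))),
          l jj (Sum.inr (Sum.inl i1))) ≤ ∑ j', l j' (Sum.inr (Sum.inl i1)) :=
        Finset.sum_le_sum_of_subset (Finset.subset_univ _)
      rw [Finset.sum_pair hne] at hsub2
      simp only [c1, c2] at hsub2
      rw [expU_apply_x] at hy
      have h3 : (if (i1 : ℕ) < t - 1 then 3 else 1) ≤ 3 := by split <;> omega
      omega
  set Pa := P.filter (fun j => 5 ≤ l j (Sum.inl 0)) with hPa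
  set Pb := P.filter (fun j => ¬ 5 ≤ l j (Sum.inl 0)) with hPb
  have hsplit : Pa.card + Pb.card = P.card :=
    Finset.card_filter_add_card_filter_not (fun j => 5 ≤ l j (Sum.inl 0))
  have h8 : 5 * Pa.card ≤ ∑ j ∈ P, l j (Sum.inl 0) := by
    calc 5 * Pa.card = ∑ _j ∈ Pa, 5 := by rw [Finset.sum_const, smul_eq_mul, mul_comm]
    _ ≤ ∑ j ∈ Pa, l j (Sum.inl 0) :=
      Finset.sum_le_sum (fun j hj => (Finset.mem_filter.mp hj).2)
    _ ≤ ∑ j ∈ P, l j (Sum.inl 0) :=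
      Finset.sum_le_sum_of_subset (Finset.filter_subset _ _)
  have h9 : 5 * Pb.card ≤ ∑ j ∈ P, l j (Sum.inl 1) := by
    have hPb5 : ∀ j ∈ Pb, 5 ≤ l j (Sum.inl 1) := by
      intro j hj
      have hjP := (Finset.mem_filter.mp hj).1
      have hjn := (Finset.mem_filter.mp hj).2
      have h1 := (Finset.mem_filter.mp hjP).2
      rcases htri j with ⟨_, h5⟩ | ⟨i, hi⟩ | ⟨i, hi⟩
      · omega
      · have := hga j i hi; omega
      · have := hgb j i hi; omega
    calc 5 * Pb.card = ∑ _j ∈ Pb, 5 := by rw [Finset.sum_const, smul_eq_mul, mul_comm]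
    _ ≤ ∑ j ∈ Pb, l j (Sum.inl 1) := Finset.sum_le_sum hPb5
    _ ≤ ∑ j ∈ P, l j (Sum.inl 1) :=
      Finset.sum_le_sum_of_subset (Finset.filter_subset _ _)
  omega
end
end

section
/- Let k ≥ 2 and let L = (a^4x_1y_1^2, b^4x_1^2y_1, …, a^4x_ny_n^2, b^4x_n^2y_n) ⊂ S with minimal monomial generating set G(L). If v_1, …, v_{k-1} ∈ G(L) and v_i = v_j for some i ≠ j, then the monomial a^4 b^4 v_1 ⋯ v_{k-1} belongs to I^k. -/
open MvPolynomial

noncomputable section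

variable (K : Type*) [Field K] (n : ℕ)

/-- The minimal monomial generating set `G(L)` of the ideal
`L = (a⁴x₁y₁², b⁴x₁²y₁, …, a⁴xₙyₙ², b⁴xₙ²yₙ)`. -/
def genL : Set (MvPolynomial (Vars n) K) :=
  Set.range (fun i => va K n ^ 4 * vx K n i * vy K n i ^ 2) ∪
  Set.range (fun i => vb K n ^ 4 * vx K n i ^ 2 * vy K n i)

/-- Let `k ≥ 2` and `v₁, …, v_{k-1} ∈ G(L)`. If `vᵢ = vⱼ` for some `i ≠ j`, then the
monomial `a⁴b⁴v₁⋯v_{k-1}` belongs to `Iᵏ`. -/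
theorem repeated_factor_mem (k : ℕ) (hk : 2 ≤ k)
    (v : Fin (k - 1) → MvPolynomial (Vars n) K) (hv : ∀ i, v i ∈ genL K n)
    (hrep : ∃ i j, i ≠ j ∧ v i = v j) :
    va K n ^ 4 * vb K n ^ 4 * ∏ i, v i ∈ (idealI K n) ^ k := by

  classical
  obtain ⟨i, j, hij, hvij⟩ := hrep
  -- basic generator memberships
  have ha6 : va K n ^ 6 ∈ idealI K n := Ideal.subset_span (by simp [idealI])
  have hb6 : vb K n ^ 6 ∈ idealI K n := Ideal.subset_span (by simp [idealI])
  have hga : ∀ m : Fin n, va K n ^ 4 * vx K n m * vy K n m ^ 2 ∈ idealI K n := fun m =>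
    Ideal.subset_span (by simp only [idealI, Set.mem_union, Set.mem_range]; left; right; exact ⟨m, rfl⟩)
  have hgb : ∀ m : Fin n, vb K n ^ 4 * vx K n m ^ 2 * vy K n m ∈ idealI K n := fun m =>
    Ideal.subset_span (by simp only [idealI, Set.mem_union, Set.mem_range]; right; exact ⟨m, rfl⟩)
  have hvI : ∀ l, v l ∈ idealI K n := by
    intro l
    rcases hv l with ⟨m, hm⟩ | ⟨m, hm⟩
    · rw [← hm]; exact hga m
    · rw [← hm]; exact hgb m
  -- key: a⁴b⁴ g² ∈ I³ for g ∈ G(L)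
  have hkey : va K n ^ 4 * vb K n ^ 4 * (v i * v j) ∈ (idealI K n) ^ 3 := by
    have hI3 : (idealI K n) ^ 3 = idealI K n * (idealI K n * idealI K n) := by ring
    rw [← hvij]
    rcases hv i with ⟨m, hm⟩ | ⟨m, hm⟩
    · have heq : va K n ^ 4 * vb K n ^ 4 * (v i * v i) =
          vy K n m ^ 3 * (va K n ^ 6 * (va K n ^ 6 * (vb K n ^ 4 * vx K n m ^ 2 * vy K n m))) := by
        rw [← hm]; simp only [va, vb, vx, vy]; ring
      rw [heq, hI3]
      exact Ideal.mul_mem_left _ _ (Ideal.mul_mem_mul ha6 (Ideal.mul_mem_mul ha6 (hgb m)))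
    · have heq : va K n ^ 4 * vb K n ^ 4 * (v i * v i) =
          vx K n m ^ 3 * (vb K n ^ 6 * (vb K n ^ 6 * (va K n ^ 4 * vx K n m * vy K n m ^ 2))) := by
        rw [← hm]; simp only [va, vb, vx, vy]; ring
      rw [heq, hI3]
      exact Ideal.mul_mem_left _ _ (Ideal.mul_mem_mul hb6 (Ideal.mul_mem_mul hb6 (hga m)))
  have hk3 : 3 ≤ k := by
    have h1 := i.isLt
    have h2 := j.isLt
    have h3 : (i : ℕ) ≠ (j : ℕ) := fun h => hij (Fin.ext h)
    omega
  -- split the product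
  set s : Finset (Fin (k - 1)) := Finset.univ \ {i, j} with hs
  have hji : j ∉ ({i} : Finset (Fin (k-1))) := by simp [Ne.symm hij]
  have huniv : (Finset.univ : Finset (Fin (k - 1))) = insert i (insert j s) := by
    ext l; simp [s, Finset.mem_insert]; tauto
  have hins1 : i ∉ insert j s := by simp [s, hij]
  have hins2 : j ∉ s := by simp [s]
  have hprod : ∏ l, v l = v i * v j * ∏ l ∈ s, v l := by
    rw [huniv, Finset.prod_insert hins1, Finset.prod_insert hins2, mul_assoc]
  have hcard : s.card = k - 3 := by
    rw [hs, Finset.card_sdiff_of_subset (by simp)]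
    rw [Finset.card_univ, Fintype.card_fin, Finset.card_insert_of_notMem (by simp [hij]),
      Finset.card_singleton]
    omega
  have hrest : ∏ l ∈ s, v l ∈ (idealI K n) ^ (k - 3) := by
    rw [← hcard]
    have := Ideal.prod_mem_prod (I := fun _ : Fin (k-1) => idealI K n) (s := s) (x := v)
      (fun l _ => hvI l)
    simpa using this
  have hfinal : (idealI K n) ^ 3 * (idealI K n) ^ (k - 3) = (idealI K n) ^ k := by
    rw [← pow_add]; congr 1; omega
  have : va K n ^ 4 * vb K n ^ 4 * ∏ l, v l =
      (va K n ^ 4 * vb K n ^ 4 * (v i * v j)) * ∏ l ∈ s, v l := by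
    rw [hprod]; ring
  rw [this, ← hfinal]
  exact Ideal.mul_mem_mul hkey hrest
end
end

section
/- Let k ≥ 2 and let L = (a^4x_1y_1^2, b^4x_1^2y_1, …, a^4x_ny_n^2, b^4x_n^2y_n) ⊂ S with minimal monomial generating set G(L). Then the colon ideal I^k : (c,d) equals I^k + (S_k), where S_k is the set of all monomials a^4 b^4 v_1 ⋯ v_{k-1} with v_1,…,v_{k-1} ∈ G(L) pairwise distinct. In particular, the S-module (I^k : (c,d))/I^k is generated by the residue classes of the elements of S_k. -/
open MvPolynomial

noncomputable section

variable (K : Type*) [Field K] (n : ℕ)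

namespace ColonAux
open Finsupp

abbrev GI (n : ℕ) := Fin 6 ⊕ (Fin n ⊕ Fin n)

def gexp (n : ℕ) : GI n → (Vars n →₀ ℕ) :=
  Sum.elim
    ![single (Sum.inl 0) 6,
      single (Sum.inl 0) 5 + single (Sum.inl 1) 1,
      single (Sum.inl 0) 1 + single (Sum.inl 1) 5,
      single (Sum.inl 1) 6,
      single (Sum.inl 0) 4 + single (Sum.inl 1) 4 + single (Sum.inl 2) 1,
      single (Sum.inl 0) 4 + single (Sum.inl 1) 4 + single (Sum.inl 3) 1]
    (Sum.elim
      (fun i => single (Sum.inl 0) 4 + single (Sum.inr (Sum.inl i)) 1 + single (Sum.inr (Sum.inr i)) 2)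
      (fun i => single (Sum.inl 1) 4 + single (Sum.inr (Sum.inl i)) 2 + single (Sum.inr (Sum.inr i)) 1))

def gen : GI n → MvPolynomial (Vars n) K :=
  Sum.elim
    ![va K n ^ 6, va K n ^ 5 * vb K n, va K n * vb K n ^ 5, vb K n ^ 6,
      va K n ^ 4 * vb K n ^ 4 * vc K n, va K n ^ 4 * vb K n ^ 4 * vd K n]
    (Sum.elim (fun i => va K n ^ 4 * vx K n i * vy K n i ^ 2)
              (fun i => vb K n ^ 4 * vx K n i ^ 2 * vy K n i))

lemma monomial_gexp (i : GI n) : (monomial (gexp n i) (1:K)) = gen K n i := by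
  rcases i with j | (i | i)
  · fin_cases j <;>
      simp [gexp, gen, va, vb, vc, vd, X, monomial_mul, monomial_pow,
        Finsupp.smul_single, Matrix.cons_val_succ] <;> try rfl
  · simp [gexp, gen, va, vx, vy, X, monomial_mul, monomial_pow, Finsupp.smul_single]
  · simp [gexp, gen, vb, vx, vy, X, monomial_mul, monomial_pow, Finsupp.smul_single]

lemma idealI_eq : idealI K n = Ideal.span ((fun s => monomial s (1:K)) '' Set.range (gexp n)) := by
  unfold idealI
  congr 1
  rw [← Set.range_comp]
  have h : (fun s => monomial s (1:K)) ∘ gexp n = gen K n := funext (monomial_gexp K n)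
  rw [h]
  unfold gen
  rw [Set.Sum.elim_range, Set.Sum.elim_range]
  simp only [Matrix.range_cons, Matrix.range_empty, Set.union_empty, Set.singleton_union]
  ext p
  simp only [Set.mem_union, Set.mem_insert_iff, Set.mem_singleton_iff, Set.mem_range]
  exact or_assoc

def Ek (n k : ℕ) : Set (Vars n →₀ ℕ) :=
  Set.range (fun f : Fin k → GI n => ∑ j, gexp n (f j))

lemma pow_eq (k : ℕ) :
    idealI K n ^ k = Ideal.span ((fun s => monomial s (1:K)) '' Ek n k) := by
  induction k with
  | zero =>
    have h0 : Ek n 0 = {0} := by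
      ext s
      simp only [Ek, Set.mem_range, Set.mem_singleton_iff]
      exact ⟨fun ⟨f, hf⟩ => by simp [← hf], fun h => ⟨Fin.elim0, by simp [h]⟩⟩
    rw [pow_zero, h0, Ideal.one_eq_top]
    simp [Ideal.span_singleton_eq_top]
  | succ k ih =>
    rw [pow_succ, ih, idealI_eq, Ideal.span_mul_span']
    congr 1
    ext q
    simp only [Set.mem_mul, Set.mem_image, Ek, Set.mem_range]
    constructor
    · rintro ⟨x, ⟨s, ⟨f, rfl⟩, rfl⟩, y, ⟨t, ⟨i, rfl⟩, rfl⟩, rfl⟩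
      refine ⟨_, ⟨Fin.snoc f i, rfl⟩, ?_⟩
      rw [monomial_mul, mul_one]
      congr 1
      rw [Fin.sum_univ_castSucc]
      simp
    · rintro ⟨s, ⟨f, rfl⟩, rfl⟩
      exact ⟨monomial (∑ j : Fin k, gexp n (f j.castSucc)) 1,
        ⟨_, ⟨fun j => f j.castSucc, rfl⟩, rfl⟩,
        monomial (gexp n (f (Fin.last k))) 1, ⟨_, ⟨f (Fin.last k), rfl⟩, rfl⟩,
        by rw [monomial_mul, mul_one]; exact congrArg (fun s => monomial s (1:K)) (Fin.sum_univ_castSucc (fun j => gexp n (f j))).symm⟩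

lemma mem_pow_iff {p : MvPolynomial (Vars n) K} {k : ℕ} :
    p ∈ idealI K n ^ k ↔
      ∀ m ∈ p.support, ∃ f : Fin k → GI n, ∑ j, gexp n (f j) ≤ m := by
  rw [pow_eq, mem_ideal_span_monomial_image]
  simp [Ek]


lemma gexp_0 : gexp n (Sum.inl 0) = single (Sum.inl 0) 6 := rfl
lemma gexp_1 : gexp n (Sum.inl 1) = single (Sum.inl 0) 5 + single (Sum.inl 1) 1 := rfl
lemma gexp_2 : gexp n (Sum.inl 2) = single (Sum.inl 0) 1 + single (Sum.inl 1) 5 := rfl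
lemma gexp_3 : gexp n (Sum.inl 3) = single (Sum.inl 1) 6 := rfl
lemma gexp_4 : gexp n (Sum.inl 4) =
    single (Sum.inl 0) 4 + single (Sum.inl 1) 4 + single (Sum.inl 2) 1 := rfl
lemma gexp_5 : gexp n (Sum.inl 5) =
    single (Sum.inl 0) 4 + single (Sum.inl 1) 4 + single (Sum.inl 3) 1 := rfl
lemma gexp_xa (i : Fin n) : gexp n (Sum.inr (Sum.inl i)) =
    single (Sum.inl 0) 4 + single (Sum.inr (Sum.inl i)) 1 + single (Sum.inr (Sum.inr i)) 2 := rfl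
lemma gexp_xb (i : Fin n) : gexp n (Sum.inr (Sum.inr i)) =
    single (Sum.inl 1) 4 + single (Sum.inr (Sum.inl i)) 2 + single (Sum.inr (Sum.inr i)) 1 := rfl

lemma gexp_C (i : GI n) (h : i ≠ Sum.inl 4) : gexp n i (Sum.inl 2) = 0 := by
  rcases i with j | (i | i)
  · fin_cases j <;>
      simp_all [gexp_0, gexp_1, gexp_2, gexp_3, gexp_4, gexp_5, Finsupp.single_apply]
  · simp [gexp_xa, Finsupp.single_apply]
  · simp [gexp_xb, Finsupp.single_apply]

lemma swap2 (t : Fin 6) : ∃ p q : GI n, gexp n p + gexp n q ≤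
    single (Sum.inl 0) 4 + single (Sum.inl 1) 4 + gexp n (Sum.inl t) := by
  fin_cases t
  · refine ⟨Sum.inl 1, Sum.inl 1, ?_⟩
    refine Finsupp.le_def.mpr fun v => ?_
    rcases v with j | (i | i)
    · fin_cases j <;>
        simp [gexp_0, gexp_1, gexp_2, gexp_3, gexp_4, gexp_5, Finsupp.single_apply]
    · simp [gexp_0, gexp_1, gexp_2, gexp_3, gexp_4, gexp_5, Finsupp.single_apply]
    · simp [gexp_0, gexp_1, gexp_2, gexp_3, gexp_4, gexp_5, Finsupp.single_apply]
  · refine ⟨Sum.inl 0, Sum.inl 2, ?_⟩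
    refine Finsupp.le_def.mpr fun v => ?_
    rcases v with j | (i | i)
    · fin_cases j <;>
        simp [gexp_0, gexp_1, gexp_2, gexp_3, gexp_4, gexp_5, Finsupp.single_apply]
    · simp [gexp_0, gexp_1, gexp_2, gexp_3, gexp_4, gexp_5, Finsupp.single_apply]
    · simp [gexp_0, gexp_1, gexp_2, gexp_3, gexp_4, gexp_5, Finsupp.single_apply]
  · refine ⟨Sum.inl 1, Sum.inl 3, ?_⟩
    refine Finsupp.le_def.mpr fun v => ?_
    rcases v with j | (i | i)
    · fin_cases j <;>
        simp [gexp_0, gexp_1, gexp_2, gexp_3, gexp_4, gexp_5, Finsupp.single_apply]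
    · simp [gexp_0, gexp_1, gexp_2, gexp_3, gexp_4, gexp_5, Finsupp.single_apply]
    · simp [gexp_0, gexp_1, gexp_2, gexp_3, gexp_4, gexp_5, Finsupp.single_apply]
  · refine ⟨Sum.inl 2, Sum.inl 2, ?_⟩
    refine Finsupp.le_def.mpr fun v => ?_
    rcases v with j | (i | i)
    · fin_cases j <;>
        simp [gexp_0, gexp_1, gexp_2, gexp_3, gexp_4, gexp_5, Finsupp.single_apply]
    · simp [gexp_0, gexp_1, gexp_2, gexp_3, gexp_4, gexp_5, Finsupp.single_apply]
    · simp [gexp_0, gexp_1, gexp_2, gexp_3, gexp_4, gexp_5, Finsupp.single_apply]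
  · refine ⟨Sum.inl 1, Sum.inl 2, ?_⟩
    refine Finsupp.le_def.mpr fun v => ?_
    rcases v with j | (i | i)
    · fin_cases j <;>
        simp [gexp_0, gexp_1, gexp_2, gexp_3, gexp_4, gexp_5, Finsupp.single_apply]
    · simp [gexp_0, gexp_1, gexp_2, gexp_3, gexp_4, gexp_5, Finsupp.single_apply]
    · simp [gexp_0, gexp_1, gexp_2, gexp_3, gexp_4, gexp_5, Finsupp.single_apply]
  · refine ⟨Sum.inl 1, Sum.inl 2, ?_⟩
    refine Finsupp.le_def.mpr fun v => ?_
    rcases v with j | (i | i)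
    · fin_cases j <;>
        simp [gexp_0, gexp_1, gexp_2, gexp_3, gexp_4, gexp_5, Finsupp.single_apply]
    · simp [gexp_0, gexp_1, gexp_2, gexp_3, gexp_4, gexp_5, Finsupp.single_apply]
    · simp [gexp_0, gexp_1, gexp_2, gexp_3, gexp_4, gexp_5, Finsupp.single_apply]

lemma swap3 (w : Fin n ⊕ Fin n) : ∃ p q r : GI n,
    gexp n p + gexp n q + gexp n r ≤
    single (Sum.inl 0) 4 + single (Sum.inl 1) 4 + (gexp n (Sum.inr w) + gexp n (Sum.inr w)) := by
  rcases w with i | i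
  · refine ⟨Sum.inl 0, Sum.inl 0, Sum.inr (Sum.inr i), Finsupp.le_def.mpr fun v => ?_⟩
    rcases v with j | (i' | i')
    · fin_cases j <;> simp [gexp_0, gexp_xa, gexp_xb, Finsupp.single_apply]
    · simp only [gexp_0, gexp_xa, gexp_xb, Finsupp.add_apply, Finsupp.single_apply]
      split_ifs <;> simp_all <;> omega
    · simp only [gexp_0, gexp_xa, gexp_xb, Finsupp.add_apply, Finsupp.single_apply]
      split_ifs <;> simp_all <;> omega
  · refine ⟨Sum.inl 3, Sum.inl 3, Sum.inr (Sum.inl i), Finsupp.le_def.mpr fun v => ?_⟩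
    rcases v with j | (i' | i')
    · fin_cases j <;> simp [gexp_3, gexp_xa, gexp_xb, Finsupp.single_apply]
    · simp only [gexp_3, gexp_xa, gexp_xb, Finsupp.add_apply, Finsupp.single_apply]
      split_ifs <;> simp_all <;> omega
    · simp only [gexp_3, gexp_xa, gexp_xb, Finsupp.add_apply, Finsupp.single_apply]
      split_ifs <;> simp_all <;> omega


lemma key {k' : ℕ} (f : Fin (k' + 1) → GI n) (m : Vars n →₀ ℕ)
    (h : ∑ j, gexp n (f j) ≤ m + single (Sum.inl 2) 1) :
    (∃ f' : Fin (k' + 1) → GI n, ∑ j, gexp n (f' j) ≤ m) ∨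
    (∃ v : Fin k' → Fin n ⊕ Fin n, Function.Injective v ∧
      single (Sum.inl 0) 4 + single (Sum.inl 1) 4 + ∑ i, gexp n (Sum.inr (v i)) ≤ m) := by
  by_cases hc : ∀ j, f j ≠ Sum.inl 4
  · left
    refine ⟨f, Finsupp.le_def.mpr fun v => ?_⟩
    have h2 := Finsupp.le_def.mp h v
    rw [Finsupp.add_apply] at h2
    by_cases hv : v = Sum.inl 2
    · subst hv
      rw [Finsupp.finset_sum_apply,
        Finset.sum_eq_zero fun j _ => gexp_C n (f j) (hc j)]
      exact Nat.zero_le _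
    · rwa [Finsupp.single_apply, if_neg (fun he => hv he.symm), add_zero] at h2
  · push_neg at hc
    obtain ⟨j0, hj0⟩ := hc
    have hsplit := Fin.sum_univ_succAbove (fun j => gexp n (f j)) j0
    set g : Fin k' → GI n := fun i => f (j0.succAbove i) with hgdef
    set R := ∑ i, gexp n (g i) with hRdef
    have hm : single (Sum.inl 0) 4 + single (Sum.inl 1) 4 + R ≤ m := by
      refine Finsupp.le_def.mpr fun v => ?_
      have h2 := Finsupp.le_def.mp h v
      rw [hsplit, hj0, gexp_4] at h2
      simp only [Finsupp.add_apply] at h2 ⊢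
      omega
    by_cases hL : ∀ i, ∃ w, g i = Sum.inr w
    · by_cases hinj : Function.Injective g
      · right
        choose w hw using hL
        refine ⟨w, fun i1 i2 he => hinj (by rw [hw i1, hw i2, he]), ?_⟩
        rw [show ∑ i, gexp n (Sum.inr (w i)) = R from
          Finset.sum_congr rfl fun i _ => by rw [← hw i]]
        exact hm
      · left
        obtain ⟨i1, i2, hgeq, hne⟩ := Function.not_injective_iff.mp hinj
        obtain ⟨w, hw⟩ := hL i1
        obtain ⟨p, q, r, hpqr⟩ := swap3 n w
        refine ⟨Fin.cons p (Function.update (Function.update g i1 q) i2 r), ?_⟩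
        rw [Fin.sum_univ_succ]
        simp only [Fin.cons_zero, Fin.cons_succ]
        have e1 : (fun i => gexp n (Function.update (Function.update g i1 q) i2 r i)) =
            Function.update (Function.update (fun i => gexp n (g i)) i1 (gexp n q)) i2
              (gexp n r) := by
          rw [show (fun i => gexp n (g i)) = gexp n ∘ g from rfl, ← Function.comp_update,
            ← Function.comp_update]
          rfl
        rw [show (∑ i, gexp n (Function.update (Function.update g i1 q) i2 r i)) =
            ∑ i, Function.update (Function.update (fun i => gexp n (g i)) i1 (gexp n q)) i2
              (gexp n r) i from Finset.sum_congr rfl fun i _ => congrFun e1 i]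
        rw [Finset.sum_update_of_mem (Finset.mem_univ i2)]
        rw [Finset.sum_update_of_mem
          (Finset.mem_sdiff.mpr ⟨Finset.mem_univ i1, by simp [hne]⟩)]
        have hRsplit : R = gexp n (g i2) + (gexp n (g i1) +
            ∑ i ∈ (Finset.univ \ {i2}) \ {i1}, gexp n (g i)) := by
          rw [hRdef, Finset.sum_eq_add_sum_sdiff_singleton_of_mem (Finset.mem_univ i2),
            Finset.sum_eq_add_sum_sdiff_singleton_of_mem
              (Finset.mem_sdiff.mpr ⟨Finset.mem_univ i1, by simp [hne]⟩)]
        have hw2 : g i2 = Sum.inr w := hgeq ▸ hw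
        refine le_trans ?_ hm
        rw [hRsplit, hw, hw2]
        set S0 := ∑ i ∈ (Finset.univ \ {i2}) \ {i1}, gexp n (g i) with hS0
        calc gexp n p + (gexp n r + (gexp n q + S0))
            = (gexp n p + gexp n q + gexp n r) + S0 := by abel
          _ ≤ (single (Sum.inl 0) 4 + single (Sum.inl 1) 4 +
              (gexp n (Sum.inr w) + gexp n (Sum.inr w))) + S0 := add_le_add_left hpqr _
          _ = single (Sum.inl 0) 4 + single (Sum.inl 1) 4 +
              (gexp n (Sum.inr w) + (gexp n (Sum.inr w) + S0)) := by abel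
    · left
      push_neg at hL
      obtain ⟨i0, hi0⟩ := hL
      obtain ⟨t, ht⟩ : ∃ t, g i0 = Sum.inl t := by
        rcases hgi : g i0 with t | w
        · exact ⟨t, rfl⟩
        · exact absurd hgi (hi0 w)
      obtain ⟨p, q, hpq⟩ := swap2 n t
      refine ⟨Fin.cons p (Function.update g i0 q), ?_⟩
      rw [Fin.sum_univ_succ]
      simp only [Fin.cons_zero, Fin.cons_succ]
      have e1 : (fun i => gexp n (Function.update g i0 q i)) =
          Function.update (fun i => gexp n (g i)) i0 (gexp n q) := by
        rw [show (fun i => gexp n (g i)) = gexp n ∘ g from rfl, ← Function.comp_update]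
        rfl
      rw [show (∑ i, gexp n (Function.update g i0 q i)) =
          ∑ i, Function.update (fun i => gexp n (g i)) i0 (gexp n q) i from
        Finset.sum_congr rfl fun i _ => congrFun e1 i]
      rw [Finset.sum_update_of_mem (Finset.mem_univ i0)]
      have hRsplit : R = gexp n (g i0) + ∑ i ∈ Finset.univ \ {i0}, gexp n (g i) := by
        rw [hRdef, Finset.sum_eq_add_sum_sdiff_singleton_of_mem (Finset.mem_univ i0)]
      refine le_trans ?_ hm
      rw [hRsplit, ht]
      set S0 := ∑ i ∈ Finset.univ \ {i0}, gexp n (g i) with hS0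
      calc gexp n p + (gexp n q + S0)
          = (gexp n p + gexp n q) + S0 := by abel
        _ ≤ (single (Sum.inl 0) 4 + single (Sum.inl 1) 4 + gexp n (Sum.inl t)) + S0 :=
            add_le_add_left hpq _
        _ = single (Sum.inl 0) 4 + single (Sum.inl 1) 4 + (gexp n (Sum.inl t) + S0) := by abel


lemma gexp_inr_inj {w w' : Fin n ⊕ Fin n}
    (h : gexp n (Sum.inr w) = gexp n (Sum.inr w')) : w = w' := by
  rcases w with i | i <;> rcases w' with i' | i'
  · have h2 := DFunLike.congr_fun h (Sum.inr (Sum.inl i))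
    simp only [gexp_xa, Finsupp.add_apply, Finsupp.single_apply] at h2
    split_ifs at h2 with h3 h4 h5 h6 h7 <;> simp_all
  · have h2 := DFunLike.congr_fun h (Sum.inl 0)
    simp [gexp_xa, gexp_xb, Finsupp.single_apply] at h2
  · have h2 := DFunLike.congr_fun h (Sum.inl 0)
    simp [gexp_xa, gexp_xb, Finsupp.single_apply] at h2
  · have h2 := DFunLike.congr_fun h (Sum.inr (Sum.inl i))
    simp only [gexp_xb, Finsupp.add_apply, Finsupp.single_apply] at h2
    split_ifs at h2 with h3 h4 h5 h6 h7 <;> simp_all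

lemma prod_monomial {α : Type*} (s : Finset α) (g : α → (Vars n →₀ ℕ)) :
    ∏ i ∈ s, monomial (g i) (1:K) = monomial (∑ i ∈ s, g i) (1:K) := by
  induction s using Finset.cons_induction with
  | empty => simp
  | cons a s ha ih => rw [Finset.prod_cons, Finset.sum_cons, ih, monomial_mul, mul_one]


end ColonAux


/-- The set `𝒮ₖ` of monomials `a⁴b⁴v₁⋯v_{k-1}` with `v₁, …, v_{k-1} ∈ G(L)` pairwise
distinct. -/
def setS (k : ℕ) : Set (MvPolynomial (Vars n) K) :=
  {w | ∃ v : Fin (k - 1) → MvPolynomial (Vars n) K,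
    (∀ i, v i ∈ genL K n) ∧ Function.Injective v ∧ w = va K n ^ 4 * vb K n ^ 4 * ∏ i, v i}

namespace ColonAux

lemma gen_inr_mem_genL (w : Fin n ⊕ Fin n) : gen K n (Sum.inr w) ∈ genL K n := by
  rcases w with i | i
  · exact Or.inl ⟨i, rfl⟩
  · exact Or.inr ⟨i, rfl⟩

lemma genL_subset : genL K n ⊆ (idealI K n : Set (MvPolynomial (Vars n) K)) := by
  rintro w (⟨i, rfl⟩ | ⟨i, rfl⟩) <;> apply Ideal.subset_span
  · exact Or.inl (Or.inr ⟨i, rfl⟩)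
  · exact Or.inr ⟨i, rfl⟩

lemma a4b4_eq : va K n ^ 4 * vb K n ^ 4 =
    monomial (Finsupp.single (Sum.inl 0) 4 + Finsupp.single (Sum.inl 1) 4) (1:K) := by
  simp [va, vb, X, monomial_mul, monomial_pow, Finsupp.smul_single]

lemma monomial_mem_setS {k' : ℕ} (v : Fin k' → Fin n ⊕ Fin n) (hv : Function.Injective v) :
    monomial (Finsupp.single (Sum.inl 0) 4 + Finsupp.single (Sum.inl 1) 4 +
      ∑ i, gexp n (Sum.inr (v i))) (1:K) ∈ setS K n (k' + 1) := by
  simp only [setS, Set.mem_setOf_eq, Nat.add_sub_cancel]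
  refine ⟨fun i => gen K n (Sum.inr (v i)), fun i => gen_inr_mem_genL K n (v i), ?_, ?_⟩
  · intro i1 i2 he
    simp only at he
    rw [← monomial_gexp, ← monomial_gexp] at he
    exact hv (gexp_inr_inj n (monomial_left_injective one_ne_zero he))
  · show _ = va K n ^ 4 * vb K n ^ 4 * ∏ i : Fin k', gen K n (Sum.inr (v i))
    rw [show (∏ i : Fin k', gen K n (Sum.inr (v i))) =
        ∏ i : Fin k', monomial (gexp n (Sum.inr (v i))) (1:K) from
      Finset.prod_congr rfl fun i _ => (monomial_gexp K n _).symm,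
      prod_monomial, a4b4_eq, monomial_mul, mul_one]

lemma a4b4c_mem : va K n ^ 4 * vb K n ^ 4 * vc K n ∈ idealI K n :=
  Ideal.subset_span (Or.inl (Or.inl (by simp)))

lemma a4b4d_mem : va K n ^ 4 * vb K n ^ 4 * vd K n ∈ idealI K n :=
  Ideal.subset_span (Or.inl (Or.inl (by simp)))

lemma prod_genL_mem {k : ℕ} (v : Fin k → MvPolynomial (Vars n) K)
    (hv : ∀ i, v i ∈ genL K n) : ∏ i, v i ∈ idealI K n ^ k := by
  have h1 : ∏ i, v i ∈ ∏ _i : Fin k, idealI K n :=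
    Ideal.prod_mem_prod fun i _ => genL_subset K n (hv i)
  simpa using h1

lemma setS_mul_mem {k' : ℕ} {u : MvPolynomial (Vars n) K}
    (hu : va K n ^ 4 * vb K n ^ 4 * u ∈ idealI K n)
    {w : MvPolynomial (Vars n) K} (hw : w ∈ setS K n (k' + 1)) :
    w * u ∈ idealI K n ^ (k' + 1) := by
  obtain ⟨v, hv, -, rfl⟩ := hw
  have h1 : ∏ i, v i ∈ idealI K n ^ k' := prod_genL_mem K n v hv
  have h2 : va K n ^ 4 * vb K n ^ 4 * (∏ i, v i) * u =
      (va K n ^ 4 * vb K n ^ 4 * u) * ∏ i, v i := by ring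
  rw [h2, pow_succ']
  exact Ideal.mul_mem_mul hu h1

lemma mul_mem_pow {k' : ℕ} {u z : MvPolynomial (Vars n) K}
    (hu : va K n ^ 4 * vb K n ^ 4 * u ∈ idealI K n)
    (hz : z ∈ idealI K n ^ (k' + 1) + Ideal.span (setS K n (k' + 1))) :
    z * u ∈ idealI K n ^ (k' + 1) := by
  rw [Submodule.add_eq_sup] at hz
  obtain ⟨y, hy, w, hw, rfl⟩ := Submodule.mem_sup.mp hz
  clear hz
  rw [add_mul]
  refine Ideal.add_mem _ (Ideal.mul_mem_right _ _ hy) ?_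
  induction hw using Submodule.span_induction with
  | mem w hwS => exact setS_mul_mem K n hu hwS
  | zero => simp
  | add w1 w2 _ _ h1 h2 => rw [add_mul]; exact Ideal.add_mem _ h1 h2
  | smul r w1 _ h1 => rw [smul_mul_assoc]; exact Submodule.smul_mem _ _ h1

end ColonAux


open ColonAux

/-- For `k ≥ 2`, the colon ideal `Iᵏ : (c,d)` equals `Iᵏ + (𝒮ₖ)`; in particular,
`(Iᵏ : (c,d))/Iᵏ` is generated by the residue classes of the elements of `𝒮ₖ`. -/
theorem colon_cd_eq (k : ℕ) (hk : 2 ≤ k) :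
    ((idealI K n) ^ k).colon (Ideal.span {vc K n, vd K n}) =
      (idealI K n) ^ k + Ideal.span (setS K n k) := by
  obtain ⟨k', rfl⟩ : ∃ k', k = k' + 1 := ⟨k - 1, by omega⟩
  apply le_antisymm
  · intro p hp
    have hpc : p * vc K n ∈ idealI K n ^ (k' + 1) := by
      have h1 := Submodule.mem_colon.mp hp (vc K n)
        (Ideal.subset_span (by simp))
      simpa [smul_eq_mul] using h1
    rw [← p.support_sum_monomial_coeff]
    refine Ideal.sum_mem _ fun m hm => ?_
    have hsupp : m + Finsupp.single (Sum.inl 2) 1 ∈ (p * vc K n).support := by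
      rw [vc, support_mul_X]
      exact Finset.mem_map.mpr ⟨m, hm, rfl⟩
    obtain ⟨f, hf⟩ := (mem_pow_iff K n).mp hpc _ hsupp
    rw [Submodule.add_eq_sup]
    rcases key n f m hf with ⟨f', hle⟩ | ⟨v, hinj, hle⟩
    · refine Submodule.mem_sup_left ?_
      have he : monomial m (MvPolynomial.coeff m p) =
          monomial (m - ∑ j, gexp n (f' j)) (MvPolynomial.coeff m p) *
            monomial (∑ j, gexp n (f' j)) 1 := by
        rw [monomial_mul, mul_one, tsub_add_cancel_of_le hle]
      rw [he]
      refine Ideal.mul_mem_left _ _ ?_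
      rw [pow_eq]
      exact Ideal.subset_span ⟨_, ⟨f', rfl⟩, rfl⟩
    · refine Submodule.mem_sup_right ?_
      set T := Finsupp.single (Sum.inl 0) 4 + Finsupp.single (Sum.inl 1) 4 + ∑ i, gexp n (Sum.inr (v i))
        with hT
      have he : monomial m (MvPolynomial.coeff m p) =
          monomial (m - T) (MvPolynomial.coeff m p) * monomial T 1 := by
        rw [monomial_mul, mul_one, tsub_add_cancel_of_le hle]
      rw [he]
      exact Ideal.mul_mem_left _ _
        (Ideal.subset_span (monomial_mem_setS K n v hinj))
  · intro z hz
    have hzc : z * vc K n ∈ idealI K n ^ (k' + 1) :=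
      mul_mem_pow K n (a4b4c_mem K n) hz
    have hzd : z * vd K n ∈ idealI K n ^ (k' + 1) :=
      mul_mem_pow K n (a4b4d_mem K n) hz
    refine Submodule.mem_colon.mpr fun q hq => ?_
    obtain ⟨r, s, rfl⟩ := Ideal.mem_span_pair.mp hq
    have he : z • (r * vc K n + s * vd K n) =
        r * (z * vc K n) + s * (z * vd K n) := by
      rw [smul_eq_mul]; ring
    rw [he]
    exact Ideal.add_mem _ (Ideal.mul_mem_left _ _ hzc) (Ideal.mul_mem_left _ _ hzd)
end
end
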